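/- arXiv:1911.07356 — 8 statements merged into one kernel-verified Lean document; each statement's English description precedes it below -/
import Mathlib

section
/- Let x, y be vectors in ℝ^m with nonnegative entries. If for every real p > 0 we have ∑_{i=1}^m x_i^p = ∑_{i=1}^m y_i^p, then x is a permutation of y (i.e., there is a bijection σ of {1,...,m} with y_i = x_{σ(i)} for all i). -/
open Real

private lemma multiset_exists_max {s : Multiset ℝ} (hs : s ≠ 0) :
    ∃ a ∈ s, ∀ b ∈ s, b ≤ a := by
  have hne : s.toFinset.Nonempty := by
    rwa [Multiset.toFinset_nonempty]
  exact ⟨s.toFinset.max' hne, Multiset.mem_toFinset.1 (s.toFinset.max'_mem hne),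
    fun b hb => Finset.le_max' _ _ (Multiset.mem_toFinset.2 hb)⟩

private lemma pos_multiset_sum_eq_zero {t : Multiset ℝ} (ht : ∀ a ∈ t, 0 < a)
    (h : t.sum = 0) : t = 0 := by
  rw [Multiset.eq_zero_iff_forall_notMem]
  intro a ha
  have := Multiset.all_zero_of_le_zero_le_of_sum_eq_zero
    (fun x hx => (ht x hx).le) h a ha
  exact absurd this (ne_of_gt (ht a ha))

/-- Sum over p=1 equals plain sum. -/
private lemma map_rpow_one (s : Multiset ℝ) (hs : ∀ a ∈ s, 0 ≤ a) :
    (s.map (· ^ (1:ℝ))).sum = s.sum := by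
  rw [Multiset.map_congr rfl (fun a ha => Real.rpow_one a), Multiset.map_id']

/-- Key comparison: if `c` is in `u`, everything in `v` is at most `d < c`, and power
sums agree, contradiction in the limit. -/
private lemma le_of_power_sums {u v : Multiset ℝ} {c d : ℝ}
    (hc : c ∈ u) (hu : ∀ z ∈ u, 0 < z) (hv : ∀ z ∈ v, 0 < z)
    (hd : ∀ z ∈ v, z ≤ d) (hdpos : 0 < d)
    (hsum : ∀ p : ℝ, 0 < p → (u.map (· ^ p)).sum = (v.map (· ^ p)).sum) :
    c ≤ d := by
  by_contra hcd
  push_neg at hcd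
  have hcpos : 0 < c := hu c hc
  set K : ℝ := (Multiset.card v : ℝ)
  have hK : 0 ≤ K := Nat.cast_nonneg _
  have hbound : ∀ p : ℝ, 0 < p → (1:ℝ) ≤ K * (d / c) ^ p := by
    intro p hp
    have h1 : c ^ p ≤ (u.map (· ^ p)).sum := by
      apply Multiset.single_le_sum
      · intro z hz
        obtain ⟨w, hw, rfl⟩ := Multiset.mem_map.1 hz
        exact Real.rpow_nonneg (hu w hw).le p
      · exact Multiset.mem_map.2 ⟨c, hc, rfl⟩
    have h2 : (v.map (· ^ p)).sum ≤ K * d ^ p := by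
      have := Multiset.sum_le_card_nsmul (v.map (· ^ p)) (d ^ p)
        (fun z hz => by
          obtain ⟨w, hw, rfl⟩ := Multiset.mem_map.1 hz
          exact Real.rpow_le_rpow (hv w hw).le (hd w hw) hp.le)
      simpa [nsmul_eq_mul, K] using this
    have h3 : c ^ p ≤ K * d ^ p := ((h1.trans_eq (hsum p hp)).trans h2)
    have hcp : (0:ℝ) < c ^ p := Real.rpow_pos_of_pos hcpos p
    rw [Real.div_rpow hdpos.le hcpos.le]
    rw [← sub_nonneg] at h3 ⊢
    calc (0:ℝ) ≤ (K * d ^ p - c ^ p) / c ^ p := div_nonneg (by linarith) hcp.le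
      _ = K * (d ^ p / c ^ p) - 1 := by field_simp
  have hr0 : (0:ℝ) ≤ d / c := div_nonneg hdpos.le hcpos.le
  have hr1 : d / c < 1 := (div_lt_one hcpos).2 hcd
  have htend : Filter.Tendsto (fun p : ℝ => K * (d / c) ^ p) Filter.atTop (nhds 0) := by
    have := tendsto_rpow_atTop_of_base_lt_one (d / c) (by linarith) hr1
    simpa using (this.const_mul K)
  have hev : ∀ᶠ p : ℝ in Filter.atTop, K * (d / c) ^ p < 1 :=
    htend.eventually_lt_const one_pos
  obtain ⟨p, hlt, hp⟩ := (hev.and (Filter.eventually_gt_atTop 0)).exists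
  exact absurd (hbound p hp) (not_le.2 hlt)

private lemma pos_multiset_eq : ∀ (n : ℕ) (s t : Multiset ℝ), Multiset.card s = n →
    (∀ a ∈ s, 0 < a) → (∀ a ∈ t, 0 < a) →
    (∀ p : ℝ, 0 < p → (s.map (· ^ p)).sum = (t.map (· ^ p)).sum) → s = t := by
  intro n
  induction n with
  | zero =>
    intro s t hcard hs ht hsum
    have hs0 : s = 0 := Multiset.card_eq_zero.mp hcard
    subst hs0
    have := hsum 1 one_pos
    rw [map_rpow_one t (fun a ha => (ht a ha).le)] at this
    simp only [Multiset.map_zero, Multiset.sum_zero] at this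
    exact (pos_multiset_sum_eq_zero ht this.symm).symm
  | succ n ih =>
    intro s t hcard hs ht hsum
    have hsne : s ≠ 0 := by
      intro h0; rw [h0] at hcard; simp at hcard
    have htne : t ≠ 0 := by
      intro h0
      have := hsum 1 one_pos
      rw [h0, map_rpow_one s (fun a ha => (hs a ha).le)] at this
      simp only [Multiset.map_zero, Multiset.sum_zero] at this
      exact hsne (pos_multiset_sum_eq_zero hs this)
    obtain ⟨a, haS, hamax⟩ := multiset_exists_max hsne
    obtain ⟨b, hbT, hbmax⟩ := multiset_exists_max htne
    have hab : a ≤ b := le_of_power_sums haS hs ht hbmax (ht b hbT) hsum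
    have hba : b ≤ a := le_of_power_sums hbT ht hs hamax (hs a haS)
      (fun p hp => (hsum p hp).symm)
    have hE : a = b := le_antisymm hab hba
    subst hE
    have hsum' : ∀ p : ℝ, 0 < p →
        ((s.erase a).map (· ^ p)).sum = ((t.erase a).map (· ^ p)).sum := by
      intro p hp
      have h1 := hsum p hp
      rw [← Multiset.cons_erase haS, ← Multiset.cons_erase hbT] at h1
      simp only [Multiset.map_cons, Multiset.sum_cons] at h1
      exact add_left_cancel h1
    have hcard' : Multiset.card (s.erase a) = n := by
      rw [Multiset.card_erase_of_mem haS, hcard]; rfl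
    have heq := ih (s.erase a) (t.erase a) hcard'
      (fun z hz => hs z (Multiset.mem_of_mem_erase hz))
      (fun z hz => ht z (Multiset.mem_of_mem_erase hz)) hsum'
    rw [← Multiset.cons_erase haS, ← Multiset.cons_erase hbT, heq]

private lemma multiset_eq_of_power_sums (s t : Multiset ℝ)
    (hcard : Multiset.card s = Multiset.card t)
    (hs : ∀ a ∈ s, 0 ≤ a) (ht : ∀ a ∈ t, 0 ≤ a)
    (hsum : ∀ p : ℝ, 0 < p → (s.map (· ^ p)).sum = (t.map (· ^ p)).sum) : s = t := by
  classical
  have key : ∀ (u : Multiset ℝ), (∀ a ∈ u, 0 ≤ a) → ∀ p : ℝ, 0 < p →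
      (u.map (· ^ p)).sum = ((u.filter (fun z => 0 < z)).map (· ^ p)).sum := by
    intro u hu p hp
    conv_lhs => rw [← Multiset.filter_add_not (fun z => 0 < z) u]
    rw [Multiset.map_add, Multiset.sum_add]
    have hz : ((u.filter (fun z => ¬ 0 < z)).map (· ^ p)).sum = 0 := by
      apply Multiset.sum_eq_zero
      intro z hz
      obtain ⟨w, hw, rfl⟩ := Multiset.mem_map.1 hz
      have hw0 : w = 0 := le_antisymm (not_lt.1 (Multiset.mem_filter.1 hw).2)
        (hu w ((Multiset.mem_filter.1 hw).1))
      rw [hw0]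
      exact Real.zero_rpow hp.ne'
    rw [hz, add_zero]
  have hfil : s.filter (fun z => 0 < z) = t.filter (fun z => 0 < z) := by
    apply pos_multiset_eq (Multiset.card (s.filter (fun z => 0 < z))) _ _ rfl
    · exact fun a ha => Multiset.of_mem_filter ha
    · exact fun a ha => Multiset.of_mem_filter ha
    · intro p hp
      rw [← key s hs p hp, ← key t ht p hp]
      exact hsum p hp
  have hnf : s.filter (fun z => ¬ 0 < z) = t.filter (fun z => ¬ 0 < z) := by
    have hcs : Multiset.card (s.filter (fun z => ¬ 0 < z))
        = Multiset.card (t.filter (fun z => ¬ 0 < z)) := by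
      have h1 := Multiset.filter_add_not (fun z => 0 < z) s
      have h2 := Multiset.filter_add_not (fun z => 0 < z) t
      have := congrArg Multiset.card h1
      have h2' := congrArg Multiset.card h2
      rw [Multiset.card_add] at this h2'
      rw [hfil] at this
      omega
    have e1 : s.filter (fun z => ¬ 0 < z)
        = Multiset.replicate (Multiset.card (s.filter (fun z => ¬ 0 < z))) 0 := by
      rw [Multiset.eq_replicate_card]
      intro b hb
      exact le_antisymm (not_lt.1 (Multiset.mem_filter.1 hb).2)
        (hs b (Multiset.mem_filter.1 hb).1)
    have e2 : t.filter (fun z => ¬ 0 < z)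
        = Multiset.replicate (Multiset.card (t.filter (fun z => ¬ 0 < z))) 0 := by
      rw [Multiset.eq_replicate_card]
      intro b hb
      exact le_antisymm (not_lt.1 (Multiset.mem_filter.1 hb).2)
        (ht b (Multiset.mem_filter.1 hb).1)
    rw [e1, e2, hcs]
  calc s = s.filter (fun z => 0 < z) + s.filter (fun z => ¬ 0 < z) :=
        (Multiset.filter_add_not _ s).symm
    _ = t.filter (fun z => 0 < z) + t.filter (fun z => ¬ 0 < z) := by rw [hfil, hnf]
    _ = t := Multiset.filter_add_not _ t

/-- If two nonnegative vectors in `ℝ^m` have equal power sums for every real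
exponent `p > 0`, then one is a permutation of the other. -/
theorem power_sums_eq_imp_perm (m : ℕ) (x y : Fin m → ℝ)
    (hx : ∀ i, 0 ≤ x i) (hy : ∀ i, 0 ≤ y i)
    (h : ∀ p : ℝ, 0 < p → ∑ i, x i ^ p = ∑ i, y i ^ p) :
    ∃ σ : Equiv.Perm (Fin m), ∀ i, y i = x (σ i) := by
  classical
  have hmult : (↑(List.ofFn x) : Multiset ℝ) = ↑(List.ofFn y) := by
    apply multiset_eq_of_power_sums
    · simp
    · intro a ha
      rw [Multiset.mem_coe, List.mem_ofFn] at ha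
      obtain ⟨i, rfl⟩ := ha
      exact hx i
    · intro a ha
      rw [Multiset.mem_coe, List.mem_ofFn] at ha
      obtain ⟨i, rfl⟩ := ha
      exact hy i
    · intro p hp
      have hxe : ((↑(List.ofFn x) : Multiset ℝ).map (· ^ p)).sum = ∑ i, x i ^ p := by
        simp [List.ofFn_eq_map, Finset.sum_eq_multiset_sum, Fin.univ_def,
          Multiset.map_map, Function.comp_def]
      have hye : ((↑(List.ofFn y) : Multiset ℝ).map (· ^ p)).sum = ∑ i, y i ^ p := by
        simp [List.ofFn_eq_map, Finset.sum_eq_multiset_sum, Fin.univ_def,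
          Multiset.map_map, Function.comp_def]
      rw [hxe, hye]
      exact h p hp
  have hperm : (List.ofFn x).Perm (List.ofFn y) := Multiset.coe_eq_coe.1 hmult
  set σx := Tuple.sort x
  set σy := Tuple.sort y
  have hsx : Monotone (x ∘ σx) := Tuple.monotone_sort x
  have hsy : Monotone (y ∘ σy) := Tuple.monotone_sort y
  have hperm' : (List.ofFn (x ∘ ⇑σx)).Perm (List.ofFn (y ∘ ⇑σy)) :=
    ((σx.ofFn_comp_perm x).trans hperm).trans (σy.ofFn_comp_perm y).symm
  have heq : x ∘ σx = y ∘ σy :=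
    List.ofFn_injective (List.Perm.eq_of_sortedLE hsx.sortedLE_ofFn hsy.sortedLE_ofFn hperm')
  refine ⟨σy⁻¹.trans σx, fun i => ?_⟩
  have := congrFun heq (σy⁻¹ i)
  simpa using this.symm
end

section
/- Let F₀ = {(cos(iπ/4), sin(iπ/4)) : i = 1,2,3,4} and G₀ = {(1,0), (cos(π/6), sin(π/6)), (0,1), (cos(2π/3), sin(2π/3))} in ℝ². Then FP₂(F₀) = FP₂(G₀) = 2 but FP₄(F₀) = 1 ≠ 5/4 = FP₄(G₀). -/
open Real
open scoped RealInnerProductSpace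

/-- The unit vector in `ℝ²` at angle `t`. -/
noncomputable def vec2 (t : ℝ) : EuclideanSpace ℝ (Fin 2) :=
  (WithLp.equiv 2 (Fin 2 → ℝ)).symm ![Real.cos t, Real.sin t]

/-- The `p`-frame potential `∑_{i<j} |⟨f i, f j⟩|^p` (natural exponent `p`). -/
noncomputable def framePotential {k : ℕ} (p : ℕ)
    (f : Fin k → EuclideanSpace ℝ (Fin 2)) : ℝ :=
  ∑ q ∈ Finset.filter (fun q : Fin k × Fin k => q.1 < q.2) Finset.univ,
    |⟪f q.1, f q.2⟫| ^ p

lemma inner_vec2 (s t : ℝ) : ⟪vec2 s, vec2 t⟫ = Real.cos (s - t) := by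
  simp [vec2, EuclideanSpace.inner_eq_star_dotProduct, Real.cos_sub, dotProduct,
    Fin.sum_univ_two, mul_comm]

set_option maxRecDepth 20000 in
lemma fp_expand (p : ℕ) (f : Fin 4 → EuclideanSpace ℝ (Fin 2)) :
    framePotential p f = |⟪f 0, f 1⟫|^p + |⟪f 0, f 2⟫|^p + |⟪f 0, f 3⟫|^p +
      |⟪f 1, f 2⟫|^p + |⟪f 1, f 3⟫|^p + |⟪f 2, f 3⟫|^p := by
  rw [framePotential, Finset.sum_filter, ← Finset.univ_product_univ, Finset.sum_product]
  simp only [Fin.sum_univ_four]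
  norm_num [Fin.lt_def, Fin.ext_iff, (by decide : ((0:Fin 4) < 3)), (by decide : ((1:Fin 4) < 3)), (by decide : ((2:Fin 4) < 3)), (by decide : ¬((3:Fin 4) = 0)), (by decide : ¬((3:Fin 4) < 2))]
  ring

/-- The frames `F₀ = {(cos(iπ/4), sin(iπ/4))}_{i=1}^4` and
`G₀ = {(1,0), (cos(π/6), sin(π/6)), (0,1), (cos(2π/3), sin(2π/3))}` satisfy
`FP₂(F₀) = FP₂(G₀) = 2` but `FP₄(F₀) = 1 ≠ 5/4 = FP₄(G₀)`. -/
theorem framePotential_example :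
    let F₀ : Fin 4 → EuclideanSpace ℝ (Fin 2) :=
      ![vec2 (π / 4), vec2 (2 * π / 4), vec2 (3 * π / 4), vec2 (4 * π / 4)]
    let G₀ : Fin 4 → EuclideanSpace ℝ (Fin 2) :=
      ![vec2 0, vec2 (π / 6), vec2 (π / 2), vec2 (2 * π / 3)]
    framePotential 2 F₀ = 2 ∧ framePotential 2 G₀ = 2 ∧
      framePotential 4 F₀ = 1 ∧ framePotential 4 G₀ = 5 / 4 ∧
      (1 : ℝ) ≠ 5 / 4 := by
  intro F₀ G₀
  have hs2 : Real.sqrt 2 ^ 2 = 2 := Real.sq_sqrt (by norm_num)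
  have hs3 : Real.sqrt 3 ^ 2 = 3 := Real.sq_sqrt (by norm_num)
  have hF : ∀ p : ℕ, framePotential p F₀ =
      (Real.sqrt 2 / 2) ^ p + 0 ^ p + (Real.sqrt 2 / 2) ^ p +
        (Real.sqrt 2 / 2) ^ p + 0 ^ p + (Real.sqrt 2 / 2) ^ p := by
    intro p
    have h1 : π/4 - 2*π/4 = -(π/4) := by ring
    have h2 : π/4 - 3*π/4 = -(π/2) := by ring
    have h3 : π/4 - 4*π/4 = -(π - π/4) := by ring
    have h4 : 2*π/4 - 3*π/4 = -(π/4) := by ring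
    have h5 : 2*π/4 - 4*π/4 = -(π/2) := by ring
    have h6 : 3*π/4 - 4*π/4 = -(π/4) := by ring
    rw [fp_expand]
    simp only [F₀, Matrix.cons_val_zero, Matrix.cons_val_one, Matrix.head_cons,
      Matrix.cons_val_two, Matrix.tail_cons, Matrix.cons_val_three,
      inner_vec2, h1, h2, h3, h4, h5, h6, Real.cos_neg, Real.cos_pi_sub,
      Real.cos_pi_div_four, Real.cos_pi_div_two, abs_neg, abs_zero,
      abs_of_nonneg (by positivity : (0:ℝ) ≤ Real.sqrt 2 / 2)]
  have hG : ∀ p : ℕ, framePotential p G₀ =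
      (Real.sqrt 3 / 2) ^ p + 0 ^ p + (1/2 : ℝ) ^ p +
        (1/2 : ℝ) ^ p + 0 ^ p + (Real.sqrt 3 / 2) ^ p := by
    intro p
    have h1 : (0:ℝ) - π/6 = -(π/6) := by ring
    have h2 : (0:ℝ) - π/2 = -(π/2) := by ring
    have h3 : (0:ℝ) - 2*π/3 = -(π - π/3) := by ring
    have h4 : π/6 - π/2 = -(π/3) := by ring
    have h5 : π/6 - 2*π/3 = -(π/2) := by ring
    have h6 : π/2 - 2*π/3 = -(π/6) := by ring
    rw [fp_expand]
    simp only [G₀, Matrix.cons_val_zero, Matrix.cons_val_one, Matrix.head_cons,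
      Matrix.cons_val_two, Matrix.tail_cons, Matrix.cons_val_three,
      inner_vec2, h1, h2, h3, h4, h5, h6, Real.cos_neg, Real.cos_pi_sub,
      Real.cos_pi_div_six, Real.cos_pi_div_two, Real.cos_pi_div_three, abs_neg, abs_zero,
      abs_of_nonneg (by positivity : (0:ℝ) ≤ Real.sqrt 3 / 2),
      abs_of_nonneg (by norm_num : (0:ℝ) ≤ 1/2)]
  refine ⟨?_, ?_, ?_, ?_, by norm_num⟩
  · rw [hF]; nlinarith [hs2]
  · rw [hG]; nlinarith [hs3]
  · rw [hF]; nlinarith [hs2]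
  · rw [hG]; nlinarith [hs3]
end

section
/- Let F and G be n×k real matrices. If F Fᵀ = G Gᵀ, then there exists a k×k orthogonal matrix Q such that G = F Q. -/
open Matrix RealInnerProductSpace

section aux

variable {n k : ℕ}

lemma aux_inner_eq (A : Matrix (Fin n) (Fin k) ℝ) (x y : EuclideanSpace ℝ (Fin n)) :
    (inner ℝ (Matrix.toEuclideanLin Aᵀ x) (Matrix.toEuclideanLin Aᵀ y) : ℝ) =
      (WithLp.equiv 2 _ x) ⬝ᵥ ((A * Aᵀ) *ᵥ (WithLp.equiv 2 _ y)) := by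
  rw [Matrix.toEuclideanLin_apply, Matrix.toEuclideanLin_apply]
  rw [show ∀ u v : Fin k → ℝ, (inner ℝ (WithLp.toLp 2 u) (WithLp.toLp 2 v) : ℝ) = u ⬝ᵥ v from fun u v => by
    simp [PiLp.inner_apply, RCLike.inner_apply, dotProduct, mul_comm]]
  rw [Matrix.mulVec_transpose, ← Matrix.dotProduct_mulVec, Matrix.mulVec_mulVec]
  rfl

end aux

/-- If two `n × k` real matrices satisfy `F Fᵀ = G Gᵀ`, then `G = F Q` for some
`k × k` orthogonal matrix `Q`. -/
theorem exists_orthogonal_of_frameOperator_eq (n k : ℕ)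
    (F G : Matrix (Fin n) (Fin k) ℝ)
    (h : F * F.transpose = G * G.transpose) :
    ∃ Q : Matrix (Fin k) (Fin k) ℝ,
      Q ∈ Matrix.orthogonalGroup (Fin k) ℝ ∧ G = F * Q := by
  classical
  set f : EuclideanSpace ℝ (Fin n) →ₗ[ℝ] EuclideanSpace ℝ (Fin k) :=
    Matrix.toEuclideanLin Fᵀ with hfdef
  set g : EuclideanSpace ℝ (Fin n) →ₗ[ℝ] EuclideanSpace ℝ (Fin k) :=
    Matrix.toEuclideanLin Gᵀ with hgdef
  have key : ∀ x y, (inner ℝ (f x) (f y) : ℝ) = (inner ℝ (g x) (g y) : ℝ) := by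
    intro x y
    rw [hfdef, hgdef, aux_inner_eq, aux_inner_eq, h]
  have hnorm : ∀ x, ‖f x‖ = ‖g x‖ := by
    intro x
    rw [@norm_eq_sqrt_re_inner ℝ, @norm_eq_sqrt_re_inner ℝ, key]
  have hker : LinearMap.ker f ≤ LinearMap.ker g := by
    intro x hx
    rw [LinearMap.mem_ker] at hx ⊢
    have := hnorm x
    rw [hx, norm_zero] at this
    exact norm_eq_zero.mp this.symm
  -- isometry on the range of f
  let h₀ : LinearMap.range f →ₗ[ℝ] EuclideanSpace ℝ (Fin k) :=
    ((LinearMap.ker f).liftQ g hker).comp f.quotKerEquivRange.symm.toLinearMap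
  have h₀_apply : ∀ (x : EuclideanSpace ℝ (Fin n)) (hx : f x ∈ LinearMap.range f),
      h₀ ⟨f x, hx⟩ = g x := by
    intro x hx
    simp only [h₀, LinearMap.comp_apply, LinearEquiv.coe_coe,
      LinearMap.quotKerEquivRange_symm_apply_image, Submodule.mkQ_apply, Submodule.liftQ_apply]
  have hiso : ∀ s : LinearMap.range f, ‖h₀ s‖ = ‖s‖ := by
    rintro ⟨s, x, rfl⟩
    rw [h₀_apply x ⟨x, rfl⟩, ← hnorm x]
    rfl
  let L : LinearMap.range f →ₗᵢ[ℝ] EuclideanSpace ℝ (Fin k) := ⟨h₀, hiso⟩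
  let T := L.extend
  have hT : ∀ x, T (f x) = g x := by
    intro x
    have : T ((⟨f x, ⟨x, rfl⟩⟩ : LinearMap.range f) : EuclideanSpace ℝ (Fin k)) =
        L ⟨f x, ⟨x, rfl⟩⟩ := L.extend_apply _
    rw [this]
    exact h₀_apply x ⟨x, rfl⟩
  set A : Matrix (Fin k) (Fin k) ℝ := Matrix.toEuclideanLin.symm T.toLinearMap with hA
  have hAT : Matrix.toEuclideanLin A = T.toLinearMap := Matrix.toEuclideanLin.apply_symm_apply _
  have hAF : A * Fᵀ = Gᵀ := by
    apply Matrix.toEuclideanLin.injective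
    ext x : 1
    have h1 : Matrix.toEuclideanLin (A * Fᵀ) x = Matrix.toEuclideanLin A (f x) := by
      rw [hfdef, Matrix.toEuclideanLin_apply, Matrix.toEuclideanLin_apply,
        Matrix.toEuclideanLin_apply]
      simp [← Matrix.mulVec_mulVec]
    rw [h1, hAT]
    exact hT x
  have hQmem : Aᵀ ∈ Matrix.orthogonalGroup (Fin k) ℝ := by
    rw [Matrix.mem_orthogonalGroup_iff]
    show Aᵀ * Aᵀᵀ = 1
    rw [Matrix.transpose_transpose]
    ext i j
    have h2 : ∀ l : Fin k, T (EuclideanSpace.single l (1:ℝ)) =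
        (WithLp.equiv 2 (Fin k → ℝ)).symm (A *ᵥ Pi.single l 1) := by
      intro l
      rw [← LinearIsometry.coe_toLinearMap, ← hAT, Matrix.toEuclideanLin_apply]
      congr 1
    have h3 := T.inner_map_map (EuclideanSpace.single i (1:ℝ)) (EuclideanSpace.single j (1:ℝ))
    rw [h2, h2] at h3
    have lhs_eq : (inner ℝ ((WithLp.equiv 2 (Fin k → ℝ)).symm (A *ᵥ Pi.single i 1)) ((WithLp.equiv 2 (Fin k → ℝ)).symm (A *ᵥ Pi.single j 1)) : ℝ) = (Aᵀ * A) i j := by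
      rw [PiLp.inner_apply, Matrix.mul_apply]
      refine Finset.sum_congr rfl fun l _ => ?_
      simp only [RCLike.inner_apply, starRingEnd_apply, star_trivial,
        WithLp.equiv_symm_apply, WithLp.ofLp_toLp, Matrix.mulVec_single, MulOpposite.op_one, one_smul,
        Matrix.col_apply, Matrix.transpose_apply, mul_one]
      ring
    have rhs_eq : (inner ℝ (EuclideanSpace.single i (1:ℝ)) (EuclideanSpace.single j (1:ℝ)) : ℝ) =
        (1 : Matrix (Fin k) (Fin k) ℝ) i j := by
      simp [EuclideanSpace.inner_single_left, Matrix.one_apply, Pi.single_apply, eq_comm]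
    rw [lhs_eq, rhs_eq] at h3
    exact h3
  exact ⟨Aᵀ, hQmem, by rw [← Matrix.transpose_transpose G, ← hAF]; simp [Matrix.transpose_mul]⟩
end

section
/- Let α₁, …, α_{k−1} be positive angles with A = ∑_{i=1}^{k−1} α_i < π, representing the consecutive angles of a unit-norm frame F in ℝ² oriented counterclockwise (so A is a cross angle of F). Then every cross angle of a frame equivalent to F lies in the set {A, π − α₁, π − α₂, …, π − α_{k−1}}. -/
open Real

/-- Two frames are equivalent when one is obtained from the other by a
composition of a common orthogonal transformation of `ℝ²`, a permutation of the
indices, and sign changes of individual vectors. -/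
def FrameEquiv {k : ℕ} (f g : Fin k → EuclideanSpace ℝ (Fin 2)) : Prop :=
  ∃ (U : EuclideanSpace ℝ (Fin 2) ≃ₗᵢ[ℝ] EuclideanSpace ℝ (Fin 2))
    (σ : Equiv.Perm (Fin k)) (ε : Fin k → ℝ),
      (∀ i, ε i = 1 ∨ ε i = -1) ∧ ∀ i, g i = ε i • U (f (σ i))

/-- `A` is a cross angle of the frame `f` if some equivalent frame `g` can be
listed counterclockwise (strictly increasing angles) with total opening
`A < π`. -/
def CrossAngles {m : ℕ} (f : Fin (m + 1) → EuclideanSpace ℝ (Fin 2)) :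
    Set ℝ :=
  {A | ∃ (g : Fin (m + 1) → EuclideanSpace ℝ (Fin 2)) (φ : Fin (m + 1) → ℝ),
    FrameEquiv f g ∧ StrictMono φ ∧ (∀ i, g i = vec2 (φ i)) ∧
      A = φ (Fin.last m) - φ 0 ∧ A < π}

/-- Combinatorial core: if two strictly monotone angle listings with spans
`< π` list the same family of lines (up to permutation and multiples of `π`),
then the second span is either the first span or `π` minus one of the gaps. -/
lemma comb_aux {k : ℕ} (θ φ : Fin (k + 2) → ℝ) (hθ : StrictMono θ) (hφ : StrictMono φ)
    (hθA : θ (Fin.last (k + 1)) - θ 0 < π) (hφA : φ (Fin.last (k + 1)) - φ 0 < π)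
    (τ : Equiv.Perm (Fin (k + 2))) (C : ℝ)
    (h : ∀ i, ∃ n : ℤ, φ i = θ (τ i) + C + π * n) :
    φ (Fin.last (k + 1)) - φ 0 = θ (Fin.last (k + 1)) - θ 0 ∨
      ∃ i : Fin (k + 1),
        φ (Fin.last (k + 1)) - φ 0 = π - (θ i.succ - θ i.castSucc) := by
  choose n hn using h
  have hπ := Real.pi_pos
  have hθd : ∀ a b : Fin (k + 2), θ a - θ b < π := by
    intro a b
    have h1 := hθ.monotone (Fin.zero_le b)
    have h2 := hθ.monotone (Fin.le_last a)
    linarith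
  have hφd : ∀ a b : Fin (k + 2), φ a - φ b < π := by
    intro a b
    have h1 := hφ.monotone (Fin.zero_le b)
    have h2 := hφ.monotone (Fin.le_last a)
    linarith
  set C' : ℝ := C + π * n (τ.symm 0) with hC'
  set m : Fin (k + 2) → ℤ := fun j => n (τ.symm j) - n (τ.symm 0) with hm
  have E : ∀ j, φ (τ.symm j) = θ j + C' + π * (m j : ℝ) := by
    intro j
    have h1 := hn (τ.symm j)
    rw [Equiv.apply_symm_apply] at h1
    rw [h1, hC', hm]
    push_cast
    ring
  have hm0 : m 0 = 0 := by simp [hm]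
  have hdic : ∀ j, m j = 0 ∨ m j = -1 := by
    intro j
    have e1 := E j
    have e2 := E 0
    rw [hm0] at e2
    have b1 := hφd (τ.symm j) (τ.symm 0)
    have b2 := hφd (τ.symm 0) (τ.symm j)
    have b3 : θ 0 ≤ θ j := hθ.monotone (Fin.zero_le j)
    have b4 := hθd j 0
    have hu : π * (m j : ℝ) < π * 1 := by push_cast at e2 ⊢; nlinarith
    have hl : π * ((-2 : ℝ)) < π * (m j : ℝ) := by push_cast at e2 ⊢; nlinarith
    have hu' : (m j : ℝ) < 1 := (mul_lt_mul_iff_right₀ hπ).mp hu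
    have hl' : (-2 : ℝ) < (m j : ℝ) := (mul_lt_mul_iff_right₀ hπ).mp hl
    have hu'' : m j < 1 := by exact_mod_cast hu'
    have hl'' : -2 < m j := by exact_mod_cast hl'
    omega
  have hup : ∀ j j' : Fin (k + 2), j < j' → m j = -1 → m j' = -1 := by
    intro j j' hjj hj
    rcases hdic j' with h0 | h1
    · exfalso
      have e1 := E j
      have e2 := E j'
      have b1 := hφd (τ.symm j') (τ.symm j)
      have b2 := hθ hjj
      rw [hj] at e1
      rw [h0] at e2
      push_cast at e1 e2
      linarith
    · exact h1
  by_cases hall : ∀ j, m j = 0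
  · left
    have e0 := E 0
    have el := E (Fin.last (k + 1))
    rw [hm0] at e0
    rw [hall _] at el
    have p1 : φ 0 ≤ φ (τ.symm 0) := hφ.monotone (Fin.zero_le _)
    have p2 : φ 0 = θ (τ 0) + C' := by
      have h2 := E (τ 0)
      rw [Equiv.symm_apply_apply, hall _] at h2
      push_cast at h2
      linarith
    have p3 : θ 0 ≤ θ (τ 0) := hθ.monotone (Fin.zero_le _)
    have q1 : φ (τ.symm (Fin.last (k + 1))) ≤ φ (Fin.last (k + 1)) :=
      hφ.monotone (Fin.le_last _)
    have q2 : φ (Fin.last (k + 1)) = θ (τ (Fin.last (k + 1))) + C' := by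
      have h2 := E (τ (Fin.last (k + 1)))
      rw [Equiv.symm_apply_apply, hall _] at h2
      push_cast at h2
      linarith
    have q3 : θ (τ (Fin.last (k + 1))) ≤ θ (Fin.last (k + 1)) := hθ.monotone (Fin.le_last _)
    push_cast at e0 el
    linarith
  · push_neg at hall
    obtain ⟨j0, hj0⟩ := hall
    have hj0' : m j0 = -1 := (hdic j0).resolve_left hj0
    have hSne : (Finset.univ.filter (fun j => m j = -1)).Nonempty := ⟨j0, by simp [hj0']⟩
    set t := (Finset.univ.filter (fun j => m j = -1)).min' hSne with htdef
    have htm : m t = -1 := by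
      have h2 := Finset.min'_mem _ hSne
      simpa using h2
    have htle : ∀ j, m j = -1 → t ≤ j := fun j hj => Finset.min'_le _ _ (by simp [hj])
    have ht0 : t ≠ 0 := by
      intro h2
      rw [h2, hm0] at htm
      exact absurd htm (by decide)
    set i : Fin (k + 1) := t.pred ht0 with hidef
    have hi : i.succ = t := Fin.succ_pred t ht0
    right
    refine ⟨i, ?_⟩
    have hcs : m i.castSucc = 0 := by
      rcases hdic i.castSucc with h0 | h1
      · exact h0
      · exfalso
        have h2 := htle _ h1
        rw [← hi] at h2
        exact absurd (lt_of_le_of_lt h2 (Fin.castSucc_lt_succ (i := i))) (lt_irrefl _)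
    have hms : m i.succ = -1 := by rw [hi]; exact htm
    have hb1 : φ 0 ≤ φ (τ.symm i.succ) := hφ.monotone (Fin.zero_le _)
    have hb2 : φ (τ.symm i.succ) = θ i.succ + C' - π := by
      have h2 := E i.succ
      rw [hms] at h2
      push_cast at h2
      linarith
    have hmτ0 : m (τ 0) = -1 := by
      rcases hdic (τ 0) with h0 | h1
      · exfalso
        have e := E (τ 0)
        rw [Equiv.symm_apply_apply, h0] at e
        push_cast at e
        have d1 : θ 0 ≤ θ (τ 0) := hθ.monotone (Fin.zero_le _)
        have d2 : θ i.succ - θ 0 < π := hθd _ _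
        linarith
      · exact h1
    have e0 : φ 0 = θ (τ 0) + C' - π := by
      have h2 := E (τ 0)
      rw [Equiv.symm_apply_apply, hmτ0] at h2
      push_cast at h2
      linarith
    have hτ0ge : θ i.succ ≤ θ (τ 0) := by
      apply hθ.monotone
      rw [hi]
      exact htle _ hmτ0
    have ebot : φ 0 = θ i.succ + C' - π := by linarith
    have ht1 : φ (τ.symm i.castSucc) ≤ φ (Fin.last (k + 1)) := hφ.monotone (Fin.le_last _)
    have ht2 : φ (τ.symm i.castSucc) = θ i.castSucc + C' := by
      have h2 := E i.castSucc
      rw [hcs] at h2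
      push_cast at h2
      linarith
    have hmτl : m (τ (Fin.last (k + 1))) = 0 := by
      rcases hdic (τ (Fin.last (k + 1))) with h0 | h1
      · exact h0
      · exfalso
        have e := E (τ (Fin.last (k + 1)))
        rw [Equiv.symm_apply_apply, h1] at e
        push_cast at e
        have d1 : θ (τ (Fin.last (k + 1))) ≤ θ (Fin.last (k + 1)) := hθ.monotone (Fin.le_last _)
        have d2 : θ 0 ≤ θ i.castSucc := hθ.monotone (Fin.zero_le _)
        linarith
    have el : φ (Fin.last (k + 1)) = θ (τ (Fin.last (k + 1))) + C' := by
      have h2 := E (τ (Fin.last (k + 1)))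
      rw [Equiv.symm_apply_apply, hmτl] at h2
      push_cast at h2
      linarith
    have hτl_le : τ (Fin.last (k + 1)) ≤ i.castSucc := by
      rw [Fin.le_castSucc_iff, hi]
      by_contra hcon
      push_neg at hcon
      rcases eq_or_lt_of_le hcon with he | hlt
      · rw [← he] at hmτl
        rw [hmτl] at htm
        exact absurd htm (by decide)
      · have h2 := hup t _ hlt htm
        rw [h2] at hmτl
        exact absurd hmτl (by decide)
    have d3 : θ (τ (Fin.last (k + 1))) ≤ θ i.castSucc := hθ.monotone hτl_le
    linarith

lemma exp_eq_exp_real {u v : ℝ}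
    (huv : Complex.exp (u * Complex.I) = Complex.exp (v * Complex.I)) :
    ∃ n : ℤ, u = v + π * n := by
  obtain ⟨n, hn⟩ := Complex.exp_eq_exp_iff_exists_int.mp huv
  refine ⟨2 * n, ?_⟩
  have h2 : (u : ℂ) * Complex.I = ((v + π * (2 * n) : ℝ) : ℂ) * Complex.I := by
    push_cast at hn ⊢
    linear_combination hn
  have h3 := mul_right_cancel₀ Complex.I_ne_zero h2
  exact_mod_cast h3

lemma exp_pm {x y e : ℝ} (he : e = 1 ∨ e = -1)
    (h : Complex.exp (x * Complex.I) = (e : ℂ) * Complex.exp (y * Complex.I)) :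
    ∃ n : ℤ, x = y + π * n := by
  rcases he with he | he
  · subst he
    rw [Complex.ofReal_one, one_mul] at h
    exact exp_eq_exp_real h
  · subst he
    have h' : Complex.exp (x * Complex.I) = Complex.exp (((y + π : ℝ) : ℂ) * Complex.I) := by
      have hsplit : ((y + π : ℝ) : ℂ) * Complex.I
          = (y : ℂ) * Complex.I + (π : ℂ) * Complex.I := by push_cast; ring
      rw [h, hsplit, Complex.exp_add, Complex.exp_pi_mul_I]
      push_cast
      ring
    obtain ⟨n, hn⟩ := exp_eq_exp_real h'
    exact ⟨n + 1, by rw [hn]; push_cast; ring⟩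

lemma Evec (t : ℝ) :
    Complex.orthonormalBasisOneI.repr.symm (vec2 t) = Complex.exp (t * Complex.I) := by
  rw [Complex.orthonormalBasisOneI_repr_symm_apply, Complex.exp_mul_I]
  have h0 : (vec2 t) 0 = Real.cos t := rfl
  have h1 : (vec2 t) 1 = Real.sin t := rfl
  rw [h0, h1, Complex.ofReal_cos, Complex.ofReal_sin]

lemma Evec' (t : ℝ) :
    Complex.orthonormalBasisOneI.repr (Complex.exp (t * Complex.I)) = vec2 t := by
  rw [← Evec t, LinearIsometryEquiv.apply_symm_apply]

/-- If a frame of `ℝ²` is listed counterclockwise with consecutive angles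
`αᵢ = θ(i+1) − θ(i)` and cross angle `A = ∑ αᵢ < π`, then every cross angle of
an equivalent frame lies in `{A, π − α₁, …, π − α_{k−1}}`. -/
theorem crossAngles_subset (k : ℕ) (θ : Fin (k + 2) → ℝ)
    (hmono : StrictMono θ) (hA : θ (Fin.last (k + 1)) - θ 0 < π) :
    ∀ A ∈ CrossAngles (fun i => vec2 (θ i)),
      A = θ (Fin.last (k + 1)) - θ 0 ∨
        ∃ i : Fin (k + 1), A = π - (θ i.succ - θ i.castSucc) := by
  intro A hA'
  obtain ⟨g, φ, ⟨U, σ, ε, hε, hg⟩, hφm, hgφ, hAdef, hAlt⟩ := hA'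
  subst hAdef
  have hveq : ∀ i, vec2 (φ i) = ε i • U (vec2 (θ (σ i))) := by
    intro i
    rw [← hgφ i]
    exact hg i
  set V : ℂ ≃ₗᵢ[ℝ] ℂ :=
    (Complex.orthonormalBasisOneI.repr.trans U).trans
      Complex.orthonormalBasisOneI.repr.symm with hVdef
  have hmain : ∀ i, Complex.exp (φ i * Complex.I)
      = (ε i : ℂ) * V (Complex.exp ((θ (σ i) : ℝ) * Complex.I)) := by
    intro i
    have h2 := congrArg Complex.orthonormalBasisOneI.repr.symm (hveq i)
    rw [Evec, map_smul] at h2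
    rw [h2, Complex.real_smul, hVdef, LinearIsometryEquiv.trans_apply,
      LinearIsometryEquiv.trans_apply, Evec']
  obtain ⟨a, ha⟩ := linear_isometry_complex V
  obtain ⟨Cv, hCv⟩ : ∃ c : ℝ, (a : ℂ) = Complex.exp ((c : ℝ) * Complex.I) := by
    refine ⟨Complex.arg a, ?_⟩
    conv_lhs => rw [← Complex.norm_mul_exp_arg_mul_I (a : ℂ)]
    rw [a.norm_coe]
    simp
  rcases ha with ha | ha
  · -- rotation case
    have h : ∀ i, ∃ n : ℤ, φ i = θ (σ i) + Cv + π * n := by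
      intro i
      have h1 := hmain i
      rw [ha, rotation_apply] at h1
      have h3 : (a : ℂ) * Complex.exp ((θ (σ i) : ℝ) * Complex.I)
          = Complex.exp (((θ (σ i) + Cv : ℝ) : ℂ) * Complex.I) := by
        rw [hCv, ← Complex.exp_add]
        congr 1
        push_cast
        ring
      rw [h3] at h1
      exact exp_pm (hε i) h1
    exact comb_aux θ φ hmono hφm hA hAlt σ Cv h
  · -- reflection case
    have h : ∀ i, ∃ n : ℤ, φ i = -θ (σ i) + Cv + π * n := by
      intro i
      have h1 := hmain i
      rw [ha, LinearIsometryEquiv.trans_apply, Complex.conjLIE_apply, rotation_apply] at h1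
      have hconj : (starRingEnd ℂ) (Complex.exp ((θ (σ i) : ℝ) * Complex.I))
          = Complex.exp (-((θ (σ i) : ℝ) : ℂ) * Complex.I) := by
        rw [← Complex.exp_conj]
        congr 1
        simp [map_mul, Complex.conj_ofReal, Complex.conj_I]
      rw [hconj] at h1
      have h3 : (a : ℂ) * Complex.exp (-((θ (σ i) : ℝ) : ℂ) * Complex.I)
          = Complex.exp (((-θ (σ i) + Cv : ℝ) : ℂ) * Complex.I) := by
        rw [hCv, ← Complex.exp_add]
        congr 1
        push_cast
        ring
      rw [h3] at h1
      exact exp_pm (hε i) h1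
    set θ' : Fin (k + 2) → ℝ := fun j => -θ j.rev with hθ'def
    have hrev0 : (0 : Fin (k + 2)).rev = Fin.last (k + 1) := by
      rw [← Fin.rev_last, Fin.rev_rev]
    have hθ'm : StrictMono θ' := by
      intro a' b' hab
      simp only [hθ'def, neg_lt_neg_iff]
      exact hmono (Fin.rev_lt_rev.mpr hab)
    have hθ'A : θ' (Fin.last (k + 1)) - θ' 0 < π := by
      simp only [hθ'def, Fin.rev_last, hrev0]
      linarith
    have h' : ∀ i, ∃ n : ℤ, φ i = θ' ((σ.trans Fin.revPerm) i) + Cv + π * n := by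
      intro i
      obtain ⟨n, hn⟩ := h i
      refine ⟨n, ?_⟩
      simp only [hθ'def, Equiv.trans_apply, Fin.revPerm_apply, Fin.rev_rev]
      exact hn
    rcases comb_aux θ' φ hθ'm hφm hθ'A hAlt (σ.trans Fin.revPerm) Cv h' with hc | ⟨i, hc⟩
    · left
      rw [hc]
      simp only [hθ'def, Fin.rev_last, hrev0]
      ring
    · right
      refine ⟨i.rev, ?_⟩
      rw [hc]
      simp only [hθ'def, Fin.rev_succ, Fin.rev_castSucc, Fin.rev_rev]
      ring
end

section
/- Let F be a unit-norm frame of ℝ² with consecutive angles α₁,…,α_{k−1} and cross angle A = ∑_{i=1}^{k−1} α_i < π. Then A is a minimal cross angle of F (i.e., A ≤ A' for every cross angle A' of any equivalent configuration) if and only if A + max_i α_i ≤ π. -/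
open Real

/-! Work with the directions of the vectors modulo `π`. An equivalent frame has its vectors at
`±U (vec2 θᵢ)` with `U` a rotation or a reflection, so the angles of a counterclockwise listing
of it are congruent mod `π` to `β + θ_{τ i}` or to `β - θ_{τ i}`; reversing the listing reduces
the reflection case to the rotation case. In a listing of opening `< π` the offset of each angle
from the first one is its residue mod `π` in `[0, π)`. If the first angle comes from `θ₀`, the
one coming from `θ_k` sits at offset `A`; if it comes from `θ_{j+1}`, the one from `θ_j` sits at
offset `π - αⱼ ≥ A`. Conversely, listing cyclically from `θ_{j+1}` and flipping the vectors that
wrap around realises the cross angle `π - αⱼ`. -/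

open AddCommGroup

theorem AddCommGroup.ModEq.eq_of_mem_Ico {α : Type*} [AddCommGroup α] [LinearOrder α]
    [IsOrderedAddMonoid α] [Archimedean α] {p a b c : α} (hp : 0 < p) (h : a ≡ b [PMOD p])
    (ha : a ∈ Set.Ico c (c + p)) (hb : b ∈ Set.Ico c (c + p)) : a = b := by
  rw [← (toIcoMod_eq_self hp).2 ha, ← (toIcoMod_eq_self hp).2 hb]
  exact h.toIcoMod_eq_toIcoMod hp

lemma vec2_eq_repr_circleExp (t : ℝ) :
    vec2 t = Complex.orthonormalBasisOneI.repr (Circle.exp t) := by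
  apply WithLp.ofLp_injective
  ext i
  fin_cases i <;>
    simp [vec2, Circle.coe_exp, Complex.exp_ofReal_mul_I_re, Complex.exp_ofReal_mul_I_im]

lemma vec2_add_pi (t : ℝ) : vec2 (t + π) = -vec2 t := by
  simp only [vec2_eq_repr_circleExp, ← map_neg, Circle.exp_add, Circle.coe_mul, Circle.coe_exp]
  rw [Complex.exp_pi_mul_I, mul_neg_one]

lemma vec2_eq_vec2_iff {s t : ℝ} : vec2 s = vec2 t ↔ s ≡ t [PMOD 2 * π] := by
  rw [vec2_eq_repr_circleExp, vec2_eq_repr_circleExp, LinearIsometryEquiv.injective _ |>.eq_iff,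
    Circle.coe_inj, Circle.exp_inj]

lemma modEq_pi_of_vec2_eq_smul {s t e : ℝ} (he : e = 1 ∨ e = -1) (h : vec2 s = e • vec2 t) :
    s ≡ t [PMOD π] := by
  have two_pi : 2 * π = 2 • π := by rw [nsmul_eq_mul, Nat.cast_ofNat]
  rcases he with rfl | rfl
  · rw [one_smul, vec2_eq_vec2_iff, two_pi] at h
    exact h.of_nsmul
  · rw [neg_one_smul, ← vec2_add_pi, vec2_eq_vec2_iff, two_pi] at h
    exact h.of_nsmul.trans (add_modEq_left.2 self_modEq_zero)

lemma LinearIsometryEquiv.exists_map_vec2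
    (U : EuclideanSpace ℝ (Fin 2) ≃ₗᵢ[ℝ] EuclideanSpace ℝ (Fin 2)) :
    ∃ β : ℝ, (∀ t, U (vec2 t) = vec2 (t + β)) ∨ (∀ t, U (vec2 t) = vec2 (β - t)) := by
  set R := Complex.orthonormalBasisOneI.repr
  obtain ⟨a, ha⟩ := linear_isometry_complex (R.trans (U.trans R.symm))
  have hU : ∀ z, U (R z) = R (R.trans (U.trans R.symm) z) := by simp
  obtain ⟨β, rfl⟩ := Circle.exp_surjective a
  refine ⟨β, ha.imp (fun ha t => ?_) (fun ha t => ?_)⟩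
  · rw [vec2_eq_repr_circleExp, hU, ha, rotation_apply, vec2_eq_repr_circleExp, Circle.exp_add,
      Circle.coe_mul, mul_comm]
  · rw [vec2_eq_repr_circleExp, hU, ha, LinearIsometryEquiv.trans_apply, rotation_apply,
      vec2_eq_repr_circleExp, Circle.exp_sub, div_eq_mul_inv, Circle.coe_mul,
      Circle.coe_inv_eq_conj, Complex.conjLIE_apply]

section LineArrangement

variable {m : ℕ}

lemma sub_le_sub_of_modEq_pi_add {x φ : Fin (m + 1) → ℝ} (hx : StrictMono x)
    (hφ : StrictMono φ)
    (hxπ : x (Fin.last m) - x 0 < π) (hφπ : φ (Fin.last m) - φ 0 < π)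
    (hgap : ∀ j : Fin m, x j.succ - x j.castSucc ≤ π - (x (Fin.last m) - x 0))
    (τ : Equiv.Perm (Fin (m + 1))) (β : ℝ) (h : ∀ i, φ i ≡ x (τ i) + β [PMOD π]) :
    x (Fin.last m) - x 0 ≤ φ (Fin.last m) - φ 0 := by
  have hφ_mem : ∀ i, φ i - φ 0 ∈ Set.Ico 0 (0 + π) := fun i =>
    ⟨sub_nonneg.2 (hφ.monotone (Fin.zero_le i)),
      by linarith [hφ.monotone (Fin.le_last i)]⟩
  have hdiff : ∀ i, φ i - φ 0 ≡ x (τ i) - x (τ 0) [PMOD π] := fun i => by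
    simpa using (h i).sub (h 0)
  have hφ_le : ∀ i, φ i - φ 0 ≤ φ (Fin.last m) - φ 0 := fun i => by
    linarith [hφ.monotone (Fin.le_last i)]
  rcases Fin.eq_zero_or_eq_succ (τ 0) with h0 | ⟨j, hj⟩
  · have hlast := hdiff (τ.symm (Fin.last m))
    rw [Equiv.apply_symm_apply, h0] at hlast
    have := hlast.eq_of_mem_Ico Real.pi_pos (hφ_mem _)
      ⟨sub_nonneg.2 (hx.monotone (Fin.zero_le _)), by linarith⟩
    linarith [hφ_le (τ.symm (Fin.last m))]
  · have hprev := hdiff (τ.symm j.castSucc)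
    rw [Equiv.apply_symm_apply, hj] at hprev
    have hα_pos : 0 < x j.succ - x j.castSucc :=
      sub_pos.2 (hx (Fin.castSucc_lt_succ (i := j)))
    have hα_lt : x j.succ - x j.castSucc < π := by
      linarith [hx.monotone (Fin.zero_le j.castSucc), hx.monotone (Fin.le_last j.succ)]
    have := (hprev.trans (add_modEq_left.2 self_modEq_zero).symm).eq_of_mem_Ico Real.pi_pos
      (hφ_mem _) ⟨by linarith, by linarith⟩
    linarith [hφ_le (τ.symm j.castSucc), hgap j]

lemma sub_le_sub_of_modEq_pi_sub {x φ : Fin (m + 1) → ℝ} (hx : StrictMono x)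
    (hφ : StrictMono φ)
    (hxπ : x (Fin.last m) - x 0 < π) (hφπ : φ (Fin.last m) - φ 0 < π)
    (hgap : ∀ j : Fin m, x j.succ - x j.castSucc ≤ π - (x (Fin.last m) - x 0))
    (τ : Equiv.Perm (Fin (m + 1))) (β : ℝ) (h : ∀ i, φ i ≡ β - x (τ i) [PMOD π]) :
    x (Fin.last m) - x 0 ≤ φ (Fin.last m) - φ 0 := by
  set y : Fin (m + 1) → ℝ := fun i => -x i.rev
  have hy : StrictMono y := fun i i' hii' => neg_lt_neg (hx (Fin.rev_lt_rev.2 hii'))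
  have hwidth : y (Fin.last m) - y 0 = x (Fin.last m) - x 0 := by
    simp only [y, Fin.rev_last, Fin.rev_zero]
    ring
  have hy_gap : ∀ j : Fin m, y j.succ - y j.castSucc = x j.rev.succ - x j.rev.castSucc := by
    intro j
    simp only [y, Fin.rev_succ, Fin.rev_castSucc]
    ring
  rw [← hwidth]
  refine sub_le_sub_of_modEq_pi_add hy hφ (hwidth ▸ hxπ) hφπ (fun j => ?_)
    (τ.trans Fin.revPerm) β (fun i => ?_)
  · rw [hy_gap, hwidth]
    exact hgap j.rev
  · simpa [y, sub_eq_neg_add, add_comm] using h i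

lemma sub_le_of_mem_crossAngles {θ : Fin (m + 1) → ℝ} (hθ : StrictMono θ)
    (hA : θ (Fin.last m) - θ 0 < π)
    (hgap : ∀ j : Fin m, θ j.succ - θ j.castSucc ≤ π - (θ (Fin.last m) - θ 0))
    {A : ℝ} (hA' : A ∈ CrossAngles (fun i => vec2 (θ i))) : θ (Fin.last m) - θ 0 ≤ A := by
  obtain ⟨g, φ, ⟨U, σ, ε, hε, hg⟩, hφ, hgφ, rfl, hφπ⟩ := hA'
  have hφσ : ∀ i, vec2 (φ i) = ε i • U (vec2 (θ (σ i))) := fun i => (hgφ i).symm.trans (hg i)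
  obtain ⟨β, hU | hU⟩ := U.exists_map_vec2
  · exact sub_le_sub_of_modEq_pi_add hθ hφ hA hφπ hgap σ β fun i =>
      modEq_pi_of_vec2_eq_smul (hε i) (by rw [hφσ, hU])
  · exact sub_le_sub_of_modEq_pi_sub hθ hφ hA hφπ hgap σ β fun i =>
      modEq_pi_of_vec2_eq_smul (hε i) (by rw [hφσ, hU])

end LineArrangement

lemma pi_sub_gap_mem_crossAngles {m : ℕ} {θ : Fin (m + 1) → ℝ} (hθ : StrictMono θ)
    (hA : θ (Fin.last m) - θ 0 < π) (j : Fin m) :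
    π - (θ j.succ - θ j.castSucc) ∈ CrossAngles (fun i => vec2 (θ i)) := by
  -- list the lines as `θ (j + 1), …, θ m, θ 0 + π, …, θ j + π`
  let wraps : Fin (m + 1) → Prop := fun i => m + 1 ≤ (i : ℕ) + (j.succ : ℕ)
  let ψ : Fin (m + 1) → ℝ := fun i => θ (i + j.succ) + if wraps i then π else 0
  have hval : ∀ i, ((i + j.succ : Fin (m + 1)) : ℕ) =
      if wraps i then (i : ℕ) + (j.succ : ℕ) - (m + 1) else (i : ℕ) + (j.succ : ℕ) :=
    fun i => Fin.val_add_eq_ite _ _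
  have hψ : StrictMono ψ := by
    intro i i' hii'
    have hlt : (i : ℕ) < i' := hii'
    have hθ_le_last := hθ.monotone (Fin.le_last (i + j.succ))
    have hθ_zero_le := hθ.monotone (Fin.zero_le (i' + j.succ))
    simp only [ψ]
    split_ifs with hi hi' hi'
    · have := hθ (show i + j.succ < i' + j.succ by
        rw [Fin.lt_def, hval, hval, if_pos hi, if_pos hi']; omega)
      linarith
    · simp only [wraps] at hi hi'
      omega
    · linarith
    · have := hθ (show i + j.succ < i' + j.succ by
        rw [Fin.lt_def, hval, hval, if_neg hi, if_neg hi']; omega)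
      linarith
  have hlast : Fin.last m + j.succ = j.castSucc := by
    ext
    rw [hval, if_pos (by simp only [wraps, Fin.val_last, Fin.val_succ]; omega)]
    simp only [Fin.val_last, Fin.val_succ, Fin.val_castSucc]
    omega
  refine ⟨fun i => vec2 (ψ i), ψ, ⟨LinearIsometryEquiv.refl ℝ _, Equiv.addRight j.succ,
    fun i => if wraps i then -1 else 1, fun i => by dsimp only; split_ifs <;> simp, fun i => ?_⟩,
    hψ, fun _ => rfl, ?_, ?_⟩
  · simp only [ψ]
    split_ifs <;> simp [vec2_add_pi]
  · simp only [ψ, hlast, zero_add]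
    rw [if_pos (by simp only [wraps, Fin.val_last, Fin.val_succ]; omega),
      if_neg (by simp only [wraps, Fin.val_zero, Fin.val_succ]; omega)]
    ring
  · linarith [hθ (Fin.castSucc_lt_succ (i := j))]

/-- A cross angle `A = ∑ αᵢ < π` of a counterclockwise-listed frame of `ℝ²` is
minimal among all cross angles of equivalent configurations if and only if
`A + max_i αᵢ ≤ π`. -/
theorem crossAngle_minimal_iff (k : ℕ) (θ : Fin (k + 2) → ℝ)
    (hmono : StrictMono θ) (hA : θ (Fin.last (k + 1)) - θ 0 < π) :
    (∀ A' ∈ CrossAngles (fun i => vec2 (θ i)),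
        θ (Fin.last (k + 1)) - θ 0 ≤ A') ↔
      θ (Fin.last (k + 1)) - θ 0 +
          (Finset.univ.sup' Finset.univ_nonempty
            fun i : Fin (k + 1) => θ i.succ - θ i.castSucc) ≤ π := by
  rw [← le_sub_iff_add_le', Finset.sup'_le_iff]
  refine ⟨fun hmin j _ => ?_, fun hgap A' hA' => ?_⟩
  · linarith [hmin _ (pi_sub_gap_mem_crossAngles hmono hA j)]
  · exact sub_le_of_mem_crossAngles hmono hA (fun j => hgap j (Finset.mem_univ j)) hA'
end

section
/- Let F and G be unit-norm frames of ℝ² with k vectors each, each having a unique minimal cross angle configuration, with angle sequences {α_i}_{i=1}^{k−1} and {β_i}_{i=1}^{k−1} respectively in these minimal configurations. Then F and G are equivalent if and only if either α_i = β_i for all i = 1,…,k−1, or α_i = β_{k−i} for all i = 1,…,k−1. -/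
open Real

noncomputable def C2E : ℂ ≃ₗᵢ[ℝ] EuclideanSpace ℝ (Fin 2) :=
  Complex.isometryOfOrthonormal (EuclideanSpace.basisFun (Fin 2) ℝ)

lemma C2E_exp (t : ℝ) : C2E (Complex.exp ((t : ℂ) * Complex.I)) = vec2 t := by
  rw [C2E, Complex.isometryOfOrthonormal_apply]
  ext j
  fin_cases j <;>
    simp [vec2, Complex.exp_ofReal_mul_I_re, Complex.exp_ofReal_mul_I_im,
      EuclideanSpace.basisFun_apply, EuclideanSpace.single_apply,
      WithLp.equiv_symm_apply, PiLp.toLp_apply]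

lemma vec2_eq_iff {a b : ℝ} : vec2 a = vec2 b ↔ ∃ n : ℤ, a = b + n * (2 * π) := by
  rw [← C2E_exp, ← C2E_exp, EquivLike.apply_eq_iff_eq,
    Complex.exp_eq_exp_iff_exists_int]
  constructor
  · rintro ⟨n, hn⟩
    refine ⟨n, ?_⟩
    have h2 : ((a : ℂ)) * Complex.I = ((b + n * (2 * π) : ℝ) : ℂ) * Complex.I := by
      rw [hn]; push_cast; ring
    have := mul_right_cancel₀ Complex.I_ne_zero h2
    exact_mod_cast this
  · rintro ⟨n, hn⟩
    exact ⟨n, by rw [hn]; push_cast; ring⟩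

lemma neg_vec2 (t : ℝ) : -vec2 t = vec2 (t + π) := by
  rw [← C2E_exp, ← C2E_exp, ← map_neg]
  congr 1
  have : ((t + π : ℝ) : ℂ) * Complex.I = (t : ℂ) * Complex.I + (π : ℂ) * Complex.I := by
    push_cast; ring
  rw [this, Complex.exp_add, Complex.exp_pi_mul_I]
  ring

lemma isometry_cases (U : EuclideanSpace ℝ (Fin 2) ≃ₗᵢ[ℝ] EuclideanSpace ℝ (Fin 2)) :
    ∃ c : ℝ, (∀ t, U (vec2 t) = vec2 (t + c)) ∨ (∀ t, U (vec2 t) = vec2 (c - t)) := by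
  obtain ⟨a, ha | ha⟩ := linear_isometry_complex ((C2E.trans U).trans C2E.symm)
  · set c : ℝ := Complex.arg (a : ℂ) with hc
    have hac : (a : ℂ) = Complex.exp ((c : ℂ) * Complex.I) := by
      rw [← Circle.coe_exp, hc, Circle.exp_arg]
    refine ⟨c, Or.inl fun t => ?_⟩
    have hU : U (vec2 t) = C2E (((C2E.trans U).trans C2E.symm) (Complex.exp ((t:ℂ) * Complex.I))) := by
      simp [C2E_exp]
    rw [hU, ha, rotation_apply, hac, ← Complex.exp_add]
    have harg : (c : ℂ) * Complex.I + (t:ℂ) * Complex.I = ((t + c : ℝ) : ℂ) * Complex.I := by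
      push_cast; ring
    rw [harg, C2E_exp]
  · set c : ℝ := Complex.arg (a : ℂ) with hc
    have hac : (a : ℂ) = Complex.exp ((c : ℂ) * Complex.I) := by
      rw [← Circle.coe_exp, hc, Circle.exp_arg]
    refine ⟨c, Or.inr fun t => ?_⟩
    have hU : U (vec2 t) = C2E (((C2E.trans U).trans C2E.symm) (Complex.exp ((t:ℂ) * Complex.I))) := by
      simp [C2E_exp]
    have hconj : Complex.conjLIE (Complex.exp ((t:ℂ) * Complex.I))
        = Complex.exp (-((t:ℂ) * Complex.I)) := by
      rw [Complex.conjLIE_apply, ← Complex.exp_conj]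
      congr 1
      simp [Complex.conj_I]
    rw [hU, ha, LinearIsometryEquiv.trans_apply, hconj, rotation_apply, hac, ← Complex.exp_add]
    have harg : (c : ℂ) * Complex.I + -((t:ℂ) * Complex.I) = ((c - t : ℝ) : ℂ) * Complex.I := by
      push_cast; ring
    rw [harg, C2E_exp]

lemma exists_rot (c : ℝ) :
    ∃ U : EuclideanSpace ℝ (Fin 2) ≃ₗᵢ[ℝ] EuclideanSpace ℝ (Fin 2),
      ∀ t, U (vec2 t) = vec2 (t + c) := by
  refine ⟨(C2E.symm.trans (rotation (Circle.exp c))).trans C2E, fun t => ?_⟩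
  have h1 : C2E.symm (vec2 t) = Complex.exp ((t:ℂ) * Complex.I) := by
    rw [← C2E_exp]; simp
  rw [LinearIsometryEquiv.trans_apply, LinearIsometryEquiv.trans_apply, h1,
    rotation_apply, Circle.coe_exp, ← Complex.exp_add]
  have harg : (c : ℂ) * Complex.I + (t:ℂ) * Complex.I = ((t + c : ℝ) : ℂ) * Complex.I := by
    push_cast; ring
  rw [harg, C2E_exp]

lemma exists_refl (c : ℝ) :
    ∃ U : EuclideanSpace ℝ (Fin 2) ≃ₗᵢ[ℝ] EuclideanSpace ℝ (Fin 2),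
      ∀ t, U (vec2 t) = vec2 (c - t) := by
  refine ⟨(C2E.symm.trans (Complex.conjLIE.trans (rotation (Circle.exp c)))).trans C2E,
    fun t => ?_⟩
  have h1 : C2E.symm (vec2 t) = Complex.exp ((t:ℂ) * Complex.I) := by
    rw [← C2E_exp]; simp
  have hconj : Complex.conjLIE (Complex.exp ((t:ℂ) * Complex.I))
      = Complex.exp (-((t:ℂ) * Complex.I)) := by
    rw [Complex.conjLIE_apply, ← Complex.exp_conj]
    congr 1
    simp [Complex.conj_I]
  rw [LinearIsometryEquiv.trans_apply, LinearIsometryEquiv.trans_apply,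
    LinearIsometryEquiv.trans_apply, h1, hconj, rotation_apply, Circle.coe_exp,
    ← Complex.exp_add]
  have harg : (c : ℂ) * Complex.I + -((t:ℂ) * Complex.I) = ((c - t : ℝ) : ℂ) * Complex.I := by
    push_cast; ring
  rw [harg, C2E_exp]

lemma key (k : ℕ) (θ ψ : Fin (k+2) → ℝ) (hθ : StrictMono θ) (hψ : StrictMono ψ)
    (hθuniq : ∀ i : Fin (k+1), θ (Fin.last (k+1)) - θ 0 + (θ i.succ - θ i.castSucc) < π)
    (hψuniq : ∀ i : Fin (k+1), ψ (Fin.last (k+1)) - ψ 0 + (ψ i.succ - ψ i.castSucc) < π)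
    (σ : Equiv.Perm (Fin (k+2))) (n : Fin (k+2) → ℤ)
    (h : ∀ i, ψ i = θ (σ i) + n i * π) :
    ∀ i : Fin (k+1), ψ i.succ - ψ i.castSucc = θ i.succ - θ i.castSucc := by
  have hπ : (0:ℝ) < π := Real.pi_pos
  have hA : θ (Fin.last (k+1)) - θ 0 < π := by
    have h1 := hθuniq 0
    have h2 := hθ (@Fin.castSucc_lt_succ _ (0 : Fin (k+1)))
    linarith
  have hB : ψ (Fin.last (k+1)) - ψ 0 < π := by
    have h1 := hψuniq 0
    have h2 := hψ (@Fin.castSucc_lt_succ _ (0 : Fin (k+1)))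
    linarith
  have hbound : ∀ a b : Fin (k+2), θ a - θ b ≤ θ (Fin.last (k+1)) - θ 0 := fun a b =>
    sub_le_sub (hθ.monotone (Fin.le_last a)) (hθ.monotone (Fin.zero_le b))
  have hstep : ∀ i : Fin (k+1),
      n i.castSucc ≤ n i.succ ∧
      (n i.succ = n i.castSucc → σ i.castSucc < σ i.succ) ∧
      (n i.castSucc < n i.succ →
        σ i.succ < σ i.castSucc ∧ n i.succ = n i.castSucc + 1) := by
    intro i
    have e1 := h i.succ
    have e0 := h i.castSucc
    have hgpos : 0 < ψ i.succ - ψ i.castSucc := sub_pos.2 (hψ (@Fin.castSucc_lt_succ _ i))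
    have hglt : ψ i.succ - ψ i.castSucc < π := by
      have h1 : ψ i.succ ≤ ψ (Fin.last (k+1)) := hψ.monotone (Fin.le_last _)
      have h2 : ψ 0 ≤ ψ i.castSucc := hψ.monotone (Fin.zero_le _)
      linarith
    have hD1 := hbound (σ i.succ) (σ i.castSucc)
    have hD2 := hbound (σ i.castSucc) (σ i.succ)
    have hgap : ψ i.succ - ψ i.castSucc
        = θ (σ i.succ) - θ (σ i.castSucc) + ((n i.succ - n i.castSucc : ℤ) : ℝ) * π := by
      rw [e1, e0]; push_cast; ring
    have hd01 : n i.succ - n i.castSucc = 0 ∨ n i.succ - n i.castSucc = 1 := by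
      have hlt2 : ((n i.succ - n i.castSucc : ℤ) : ℝ) < 2 := by nlinarith
      have hgtm1 : (-1 : ℝ) < ((n i.succ - n i.castSucc : ℤ) : ℝ) := by nlinarith
      have hlt2' : (n i.succ - n i.castSucc : ℤ) < 2 := by exact_mod_cast hlt2
      have hgt' : (-1 : ℤ) < n i.succ - n i.castSucc := by exact_mod_cast hgtm1
      omega
    refine ⟨by omega, fun heq => ?_, fun hlt => ?_⟩
    · have : n i.succ - n i.castSucc = 0 := by omega
      rw [this] at hgap
      have : θ (σ i.castSucc) < θ (σ i.succ) := by push_cast at hgap; linarith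
      exact hθ.lt_iff_lt.mp this
    · have h1 : n i.succ - n i.castSucc = 1 := by omega
      refine ⟨?_, by omega⟩
      rw [h1] at hgap
      have : θ (σ i.succ) < θ (σ i.castSucc) := by push_cast at hgap; linarith
      exact hθ.lt_iff_lt.mp this
  have hmono : Monotone n := Fin.monotone_iff_le_succ.mpr fun i => (hstep i).1
  have hNglob : n (Fin.last (k+1)) = n 0 ∨ n (Fin.last (k+1)) = n 0 + 1 := by
    have e1 := h (Fin.last (k+1))
    have e0 := h 0
    have hBpos : 0 < ψ (Fin.last (k+1)) - ψ 0 := by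
      refine sub_pos.2 (hψ ?_)
      rw [Fin.lt_def]; simp
    have hD1 := hbound (σ (Fin.last (k+1))) (σ 0)
    have hD2 := hbound (σ 0) (σ (Fin.last (k+1)))
    have hgap : ψ (Fin.last (k+1)) - ψ 0
        = θ (σ (Fin.last (k+1))) - θ (σ 0) + ((n (Fin.last (k+1)) - n 0 : ℤ) : ℝ) * π := by
      rw [e1, e0]; push_cast; ring
    have hlt2 : ((n (Fin.last (k+1)) - n 0 : ℤ) : ℝ) < 2 := by nlinarith
    have hgtm1 : (-1 : ℝ) < ((n (Fin.last (k+1)) - n 0 : ℤ) : ℝ) := by nlinarith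
    have hlt2' : (n (Fin.last (k+1)) - n 0 : ℤ) < 2 := by exact_mod_cast hlt2
    have hgt' : (-1 : ℤ) < n (Fin.last (k+1)) - n 0 := by exact_mod_cast hgtm1
    omega
  rcases hNglob with hNeq | hNeq
  · -- no jump : σ = id and n constant
    have hconst : ∀ j, n j = n 0 := fun j =>
      le_antisymm (hNeq ▸ hmono (Fin.le_last j)) (hmono (Fin.zero_le j))
    have hsm : StrictMono σ := Fin.strictMono_iff_lt_succ.mpr fun i =>
      (hstep i).2.1 (by rw [hconst i.succ, hconst i.castSucc])
    have hσid : ⇑σ = id := by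
      apply (hsm.range_inj strictMono_id).mp
      rw [σ.surjective.range_eq, Set.range_id]
    intro i
    rw [h i.succ, h i.castSucc, hconst i.succ, hconst i.castSucc,
      congrFun hσid i.succ, congrFun hσid i.castSucc]
    simp
  · -- exactly one jump : contradiction
    exfalso
    have hex : ∃ p : Fin (k+1), n p.castSucc < n p.succ := by
      by_contra hcon
      push_neg at hcon
      have hanti : Monotone (fun j => -n j) :=
        Fin.monotone_iff_le_succ.mpr fun i => neg_le_neg (hcon i)
      have := hanti (Fin.zero_le (Fin.last (k+1)))
      simp only at this
      omega
    obtain ⟨p, hp⟩ := hex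
    obtain ⟨hjumpσ, hjumpn⟩ := (hstep p).2.2 hp
    have huniqstep : ∀ i : Fin (k+1), i ≠ p → n i.succ = n i.castSucc := by
      intro i hip
      refine le_antisymm ?_ (hstep i).1
      by_contra hlt
      push_neg at hlt
      have hlt' : n i.castSucc < n i.succ := by omega
      have key2 : ∀ a b : Fin (k+1), a < b → n a.castSucc < n a.succ →
          n b.castSucc < n b.succ → False := by
        intro a b hab ha hb
        have h1 : a.succ ≤ b.castSucc := by
          rw [Fin.le_def]
          rw [Fin.lt_def] at hab
          simp only [Fin.val_succ, Fin.coe_castSucc]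
          omega
        have h2 := hmono h1
        have h3 := hmono (Fin.zero_le a.castSucc)
        have h4 := hmono (Fin.le_last b.succ)
        omega
      rcases lt_or_gt_of_ne hip with hlt2 | hgt2
      · exact key2 i p hlt2 hlt' hp
      · exact key2 p i hgt2 hp hlt'
    have hstepσ : ∀ i : Fin (k+1), i ≠ p → σ i.castSucc < σ i.succ := fun i hip =>
      (hstep i).2.1 (huniqstep i hip)
    have M1 : ∀ j : ℕ, ∀ (hjk : j < k + 2), j ≤ (p : ℕ) → σ 0 ≤ σ ⟨j, hjk⟩ := by
      intro j
      induction j with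
      | zero => intro hjk _; exact le_of_eq rfl
      | succ j ih =>
        intro hjk hjp
        have hjk' : j < k + 2 := by omega
        have hik : j < k + 1 := by omega
        set i : Fin (k+1) := ⟨j, hik⟩ with hi
        have hip : i ≠ p := by
          intro hcon
          have := congrArg Fin.val hcon
          simp only [hi] at this
          omega
        have hs := hstepσ i hip
        have e0 : i.castSucc = (⟨j, hjk'⟩ : Fin (k+2)) := rfl
        have e1 : i.succ = (⟨j+1, hjk⟩ : Fin (k+2)) := rfl
        rw [e0, e1] at hs
        exact le_trans (ih hjk' (by omega)) (le_of_lt hs)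
    have M2 : ∀ t j : ℕ, ∀ (hjk : j < k + 2), j + t = k + 1 → (p : ℕ) + 1 ≤ j →
        σ ⟨j, hjk⟩ ≤ σ (Fin.last (k+1)) := by
      intro t
      induction t with
      | zero =>
        intro j hjk hjt _
        have : (⟨j, hjk⟩ : Fin (k+2)) = Fin.last (k+1) := by
          apply Fin.ext; simp [Fin.val_last]; omega
        rw [this]
      | succ t ih =>
        intro j hjk hjt hpj
        have hik : j < k + 1 := by omega
        set i : Fin (k+1) := ⟨j, hik⟩ with hi
        have hip : i ≠ p := by
          intro hcon
          have := congrArg Fin.val hcon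
          simp only [hi] at this
          omega
        have hs := hstepσ i hip
        have hjk2 : j + 1 < k + 2 := by omega
        have e0 : i.castSucc = (⟨j, hjk⟩ : Fin (k+2)) := rfl
        have e1 : i.succ = (⟨j+1, hjk2⟩ : Fin (k+2)) := rfl
        rw [e0, e1] at hs
        exact le_trans (le_of_lt hs) (ih (j+1) hjk2 (by omega) (by omega))
    -- now the contradiction
    have hBeq : ψ (Fin.last (k+1)) - ψ 0
        = θ (σ (Fin.last (k+1))) - θ (σ 0) + π := by
      rw [h (Fin.last (k+1)), h 0, hNeq]; push_cast; ring
    have hGp : ψ p.succ - ψ p.castSucc = θ (σ p.succ) - θ (σ p.castSucc) + π := by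
      rw [h p.succ, h p.castSucc, hjumpn]; push_cast; ring
    have hstar := hψuniq p
    rw [hBeq, hGp] at hstar
    have hbc : θ (σ p.castSucc) - θ (σ p.succ) ≤ θ (Fin.last (k+1)) - θ 0 := hbound _ _
    have hne : σ 0 ≠ σ (Fin.last (k+1)) := by
      intro hcon
      have := σ.injective hcon
      have := congrArg Fin.val this
      simp [Fin.val_last] at this
    rcases lt_or_gt_of_ne hne with hlt | hgt
    · have : θ (σ 0) < θ (σ (Fin.last (k+1))) := hθ hlt
      linarith
    · -- σ (last) < σ 0 : show vals adjacent
      have hadj : (σ 0 : ℕ) = (σ (Fin.last (k+1)) : ℕ) + 1 := by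
        by_contra hne2
        have hgt' : (σ (Fin.last (k+1)) : ℕ) + 1 < (σ 0 : ℕ) := by
          have := Fin.lt_def.mp hgt
          omega
        set q : Fin (k+2) := ⟨(σ (Fin.last (k+1)) : ℕ) + 1, by omega⟩ with hq
        set j : Fin (k+2) := σ.symm q with hj
        have hqj : σ j = q := σ.apply_symm_apply q
        rcases le_or_gt (j : ℕ) (p : ℕ) with hjp | hjp
        · have := M1 (j : ℕ) j.isLt hjp
          rw [Fin.eta, hqj] at this
          rw [Fin.le_def] at this
          simp only [hq] at this
          omega
        · have := M2 (k + 1 - (j : ℕ)) (j : ℕ) j.isLt (by omega) (by omega)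
          rw [Fin.eta, hqj] at this
          rw [Fin.le_def] at this
          simp only [hq] at this
          omega
      have hd'lt : (σ (Fin.last (k+1)) : ℕ) < k + 1 := by
        have := (σ 0).isLt
        omega
      set i0 : Fin (k+1) := ⟨(σ (Fin.last (k+1)) : ℕ), hd'lt⟩ with hi0
      have ha' : σ 0 = i0.succ := by
        apply Fin.ext; simp only [Fin.val_succ, hi0]; omega
      have hd'' : σ (Fin.last (k+1)) = i0.castSucc := by
        apply Fin.ext; simp [hi0]
      have huu := hθuniq i0
      rw [← ha', ← hd''] at huu
      linarith

/-- Let `F`, `G` be unit-norm frames of `ℝ²`, each given in its (unique)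
minimal cross angle configuration, with consecutive angles
`αᵢ = θ(i+1) − θ(i)` and `βᵢ = φ(i+1) − φ(i)`; uniqueness of the minimal
configuration is expressed by `A + αᵢ < π` (resp. `B + βᵢ < π`) for all `i`.
Then `F` and `G` are equivalent iff `αᵢ = βᵢ` for all `i` or `αᵢ = β_{k−i}` for
all `i`. -/
theorem frameEquiv_iff_angles_eq_or_rev (k : ℕ) (θ φ : Fin (k + 2) → ℝ)
    (hθ : StrictMono θ) (hφ : StrictMono φ)
    (hθA : θ (Fin.last (k + 1)) - θ 0 < π)
    (hφA : φ (Fin.last (k + 1)) - φ 0 < π)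
    (hθuniq : ∀ i : Fin (k + 1),
      θ (Fin.last (k + 1)) - θ 0 + (θ i.succ - θ i.castSucc) < π)
    (hφuniq : ∀ i : Fin (k + 1),
      φ (Fin.last (k + 1)) - φ 0 + (φ i.succ - φ i.castSucc) < π) :
    FrameEquiv (fun i => vec2 (θ i)) (fun i => vec2 (φ i)) ↔
      ((∀ i : Fin (k + 1), θ i.succ - θ i.castSucc = φ i.succ - φ i.castSucc) ∨
        (∀ i : Fin (k + 1),
          θ i.succ - θ i.castSucc = φ i.rev.succ - φ i.rev.castSucc)) := by
  constructor
  · rintro ⟨U, σ, ε, hε, hg⟩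
    simp only at hg
    obtain ⟨c, hU | hU⟩ := isometry_cases U
    · -- rotation case
      left
      have hn : ∀ i, ∃ nn : ℤ, φ i - c = θ (σ i) + nn * π := by
        intro i
        have hgi := hg i
        rcases hε i with he | he
        · rw [he, one_smul, hU] at hgi
          obtain ⟨m, hm⟩ := vec2_eq_iff.mp hgi
          exact ⟨2 * m, by rw [hm]; push_cast; ring⟩
        · rw [he, neg_smul, one_smul, hU, neg_vec2] at hgi
          obtain ⟨m, hm⟩ := vec2_eq_iff.mp hgi
          exact ⟨2 * m + 1, by rw [hm]; push_cast; ring⟩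
      choose nn hnn using hn
      have hψ : StrictMono (fun i => φ i - c) := fun a b hab =>
        sub_lt_sub_right (hφ hab) c
      have hψuniq : ∀ i : Fin (k+1),
          (fun i => φ i - c) (Fin.last (k+1)) - (fun i => φ i - c) 0 +
            ((fun i => φ i - c) i.succ - (fun i => φ i - c) i.castSucc) < π := by
        intro i
        have := hφuniq i
        simp only
        linarith
      have hres := key k θ (fun i => φ i - c) hθ hψ hθuniq hψuniq σ nn hnn
      intro i
      have := hres i
      linarith
    · -- reflection case
      right
      have hn : ∀ i, ∃ nn : ℤ, φ i - c = -θ (σ i) + nn * π := by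
        intro i
        have hgi := hg i
        rcases hε i with he | he
        · rw [he, one_smul, hU] at hgi
          obtain ⟨m, hm⟩ := vec2_eq_iff.mp hgi
          exact ⟨2 * m, by rw [hm]; push_cast; ring⟩
        · rw [he, neg_smul, one_smul, hU, neg_vec2] at hgi
          obtain ⟨m, hm⟩ := vec2_eq_iff.mp hgi
          exact ⟨2 * m + 1, by rw [hm]; push_cast; ring⟩
      choose nn hnn using hn
      set θ' : Fin (k+2) → ℝ := fun j => -θ j.rev with hθ'def
      have hθ' : StrictMono θ' := fun a b hab =>
        neg_lt_neg (hθ (Fin.rev_lt_rev.mpr hab))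
      have hθ'uniq : ∀ i : Fin (k+1),
          θ' (Fin.last (k+1)) - θ' 0 + (θ' i.succ - θ' i.castSucc) < π := by
        intro i
        have := hθuniq i.rev
        simp only [hθ'def, Fin.rev_last, Fin.rev_zero, Fin.rev_succ, Fin.rev_castSucc]
        linarith
      have hψ : StrictMono (fun i => φ i - c) := fun a b hab =>
        sub_lt_sub_right (hφ hab) c
      have hψuniq : ∀ i : Fin (k+1),
          (fun i => φ i - c) (Fin.last (k+1)) - (fun i => φ i - c) 0 +
            ((fun i => φ i - c) i.succ - (fun i => φ i - c) i.castSucc) < π := by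
        intro i
        have := hφuniq i
        simp only
        linarith
      have hx : ∀ i, φ i - c = θ' ((σ.trans Fin.revPerm) i) + nn i * π := by
        intro i
        rw [hnn i]
        simp [hθ'def, Fin.rev_rev]
      have hres := key k θ' (fun i => φ i - c) hθ' hψ hθ'uniq hψuniq
        (σ.trans Fin.revPerm) nn hx
      intro i
      have := hres i.rev
      simp only [hθ'def, Fin.rev_succ, Fin.rev_castSucc, Fin.rev_rev] at this
      linarith
  · rintro (hsame | hrev)
    · have hshift : ∀ i : Fin (k+2), φ i = θ i + (φ 0 - θ 0) := by
        intro i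
        induction i using Fin.induction with
        | zero => ring
        | succ j ih =>
          have := hsame j
          linarith
      obtain ⟨U, hU⟩ := exists_rot (φ 0 - θ 0)
      refine ⟨U, Equiv.refl _, fun _ => 1, fun _ => Or.inl rfl, fun i => ?_⟩
      simp only [Equiv.refl_apply, one_smul]
      rw [hU, ← hshift i]
    · set c : ℝ := φ 0 + θ (Fin.last (k+1)) with hc
      have hshift : ∀ i : Fin (k+2), φ i = c - θ i.rev := by
        intro i
        induction i using Fin.induction with
        | zero => rw [Fin.rev_zero]; ring
        | succ j ih =>
          have h1 := hrev j.rev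
          rw [Fin.rev_rev] at h1
          rw [Fin.rev_succ]
          have h2 : θ j.castSucc.rev = θ j.rev.succ := by rw [Fin.rev_castSucc]
          rw [h2] at ih
          linarith
      obtain ⟨U, hU⟩ := exists_refl c
      refine ⟨U, Fin.revPerm, fun _ => 1, fun _ => Or.inl rfl, fun i => ?_⟩
      simp only [Fin.revPerm_apply, one_smul]
      rw [hU, hshift i]
end

section
/- Let F = {f₁,f₂,f₃} and G = {g₁,g₂,g₃} be unit-norm frames of ℝ² with three vectors each. Then F and G are equivalent if and only if the multiset {|⟨f₁,f₂⟩|, |⟨f₁,f₃⟩|, |⟨f₂,f₃⟩|} equals the multiset {|⟨g₁,g₂⟩|, |⟨g₁,g₃⟩|, |⟨g₂,g₃⟩|}. -/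
open scoped RealInnerProductSpace

/-!
Three vectors of `ℝ²` have a singular Gram matrix; for unit vectors with pairwise inner products
`a, b, c` this reads `2abc = a² + b² + c² - 1`. So once a permutation matches the pairs of `f` with
those of `g` by absolute inner product, the products `abc` agree as well, and this is exactly what
is needed to flip the signs of the vectors of `f` until the two Gram matrices coincide. Families
with equal Gram matrices differ by an isometry.
-/

open scoped InnerProductSpace

namespace Matrix

variable {𝕜 E ι : Type*} [RCLike 𝕜] [NormedAddCommGroup E] [InnerProductSpace 𝕜 E]
  [FiniteDimensional 𝕜 E] [Fintype ι]

theorem det_gram_eq_zero_of_finrank_lt [DecidableEq ι] (v : ι → E)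
    (h : Module.finrank 𝕜 E < Fintype.card ι) : (gram 𝕜 v).det = 0 := by
  by_contra hv
  exact h.not_ge (det_gram_ne_zero_iff_linearIndependent.mp hv).fintype_card_le_finrank

theorem exists_linearIsometryEquiv_apply_eq_of_gram_eq {v w : ι → E}
    (h : gram 𝕜 v = gram 𝕜 w) : ∃ U : E ≃ₗᵢ[𝕜] E, ∀ i, U (v i) = w i := by
  let Lv := Fintype.linearCombination 𝕜 v
  let Lw := Fintype.linearCombination 𝕜 w
  have hnorm (c : ι → 𝕜) : ‖Lw c‖ = ‖Lv c‖ := by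
    have : ⟪Lw c, Lw c⟫_𝕜 = ⟪Lv c, Lv c⟫_𝕜 := by
      simp only [Lv, Lw, Fintype.linearCombination_apply, ← star_dotProduct_gram_mulVec, h]
    rw [inner_self_eq_norm_sq_to_K, inner_self_eq_norm_sq_to_K] at this
    exact (pow_left_inj₀ (norm_nonneg _) (norm_nonneg _) two_ne_zero).mp (mod_cast this)
  have hker : LinearMap.ker Lv ≤ LinearMap.ker Lw := fun c hc => by
    rw [LinearMap.mem_ker, ← norm_eq_zero, hnorm, norm_eq_zero]
    exact hc
  -- `∑ cᵢ vᵢ ↦ ∑ cᵢ wᵢ` is well defined and isometric on the span of `v`; then extend it to `E`.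
  let T := (LinearMap.ker Lv).liftQ Lw hker ∘ₗ Lv.quotKerEquivRange.symm.toLinearMap
  have hT (c : ι → 𝕜) : T ⟨Lv c, LinearMap.mem_range_self Lv c⟩ = Lw c := by simp [T]
  have hTnorm (x : LinearMap.range Lv) : ‖T x‖ = ‖x‖ := by
    obtain ⟨_, c, rfl⟩ := x
    rw [hT, hnorm]
    rfl
  let L : LinearMap.range Lv →ₗᵢ[𝕜] E := ⟨T, hTnorm⟩
  classical
  refine ⟨L.extend.toLinearIsometryEquiv rfl, fun i => ?_⟩
  have := L.extend_apply ⟨Lv (Pi.single i 1), LinearMap.mem_range_self Lv _⟩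
  rw [show L _ = _ from hT _] at this
  simpa [Lv, Lw] using this

end Matrix

theorem Fintype.exists_perm_comp_eq_of_map_univ_eq {α β : Type*} [Fintype α] [DecidableEq β]
    {a b : α → β} (h : Finset.univ.val.map a = Finset.univ.val.map b) :
    ∃ σ : Equiv.Perm α, a ∘ σ = b := by
  classical
  have hcard (c : β) : Fintype.card {x // b x = c} = Fintype.card {x // a x = c} := by
    have := congrArg (Multiset.count c) h
    simp only [Multiset.count_map] at this
    simp only [Fintype.card_subtype, Finset.card, Finset.filter_val]
    simpa [eq_comm] using this.symm
  exact ⟨Equiv.ofFiberEquiv fun c => Fintype.equivOfCardEq (hcard c),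
    funext (Equiv.ofFiberEquiv_map _)⟩

theorem Fin.perm_three_apply_add (σ : Equiv.Perm (Fin 3)) (k : Fin 3) :
    (σ (k + 1) = σ k + 1 ∧ σ (k + 2) = σ k + 2) ∨ (σ (k + 1) = σ k + 2 ∧ σ (k + 2) = σ k + 1) := by
  revert σ k
  decide

theorem exists_sign_mul_eq_of_abs_eq {x y : ℝ} (h : |x| = |y|) :
    ∃ s : ℝ, s * s = 1 ∧ y = s * x := by
  rcases abs_eq_abs.mp h with h | h
  · exact ⟨1, one_mul 1, by rw [h, one_mul]⟩
  · exact ⟨-1, by norm_num, by rw [h]; ring⟩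

theorem exists_signs_of_abs_eq_of_prod_eq {x y : Fin 3 → ℝ} (habs : ∀ k, |x k| = |y k|)
    (hprod : ∏ k, x k = ∏ k, y k) :
    ∃ ε : Fin 3 → ℝ, (∀ i, ε i = 1 ∨ ε i = -1) ∧ ∀ k, y k = ε (k + 1) * ε (k + 2) * x k := by
  suffices ∃ s t u : ℝ, s * s = 1 ∧ t * t = 1 ∧ u * u = 1 ∧
      y 0 = t * u * x 0 ∧ y 1 = u * s * x 1 ∧ y 2 = s * t * x 2 by
    obtain ⟨s, t, u, hs, ht, hu, h0, h1, h2⟩ := this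
    refine ⟨![s, t, u], fun i => ?_, fun k => ?_⟩
    · fin_cases i <;> simpa using mul_self_eq_one_iff.mp ‹_›
    · fin_cases k <;> simp [h0, h1, h2]
  obtain ⟨a, ha, h0⟩ := exists_sign_mul_eq_of_abs_eq (habs 0)
  obtain ⟨b, hb, h1⟩ := exists_sign_mul_eq_of_abs_eq (habs 1)
  obtain ⟨c, hc, h2⟩ := exists_sign_mul_eq_of_abs_eq (habs 2)
  -- The sign of a vanishing `x k` is arbitrary; if none vanishes, `hprod` forces `a * b * c = 1`.
  by_cases hx0 : x 0 = 0
  · exact ⟨1, c, b, one_mul 1, hc, hb, by simp [h0, hx0], by rw [h1]; ring, by rw [h2]; ring⟩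
  by_cases hx1 : x 1 = 0
  · exact ⟨c, 1, a, hc, one_mul 1, ha, by rw [h0]; ring, by simp [h1, hx1], by rw [h2]; ring⟩
  by_cases hx2 : x 2 = 0
  · exact ⟨b, a, 1, hb, ha, one_mul 1, by rw [h0]; ring, by rw [h1]; ring, by simp [h2, hx2]⟩
  have habc : a * b * c = 1 := by
    rw [Fin.prod_univ_three, Fin.prod_univ_three, h0, h1, h2] at hprod
    have : (a * b * c - 1) * (x 0 * x 1 * x 2) = 0 := by linear_combination -hprod
    simpa [hx0, hx1, hx2, sub_eq_zero] using this
  refine ⟨a, b, c, ha, hb, hc, ?_, ?_, ?_⟩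
  · rw [h0]; linear_combination (-(a * x 0)) * habc + b * c * x 0 * ha
  · rw [h1]; linear_combination (-(b * x 1)) * habc + c * a * x 1 * hb
  · rw [h2]; linear_combination (-(c * x 2)) * habc + a * b * x 2 * hc

section Triple

open Matrix

variable {E : Type*} [NormedAddCommGroup E] [InnerProductSpace ℝ E]

theorem Matrix.gram_eq_of_inner_eq_fin_three {v w : Fin 3 → E}
    (hdiag : ∀ i, ⟪v i, v i⟫ = ⟪w i, w i⟫)
    (hoff : ∀ k, ⟪v (k + 1), v (k + 2)⟫ = ⟪w (k + 1), w (k + 2)⟫) : gram ℝ v = gram ℝ w := by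
  have h0 := hoff 0
  have h1 := hoff 1
  have h2 := hoff 2
  simp only [zero_add, Fin.reduceAdd] at h0 h1 h2
  have hsymm {i j} (h : ⟪v i, v j⟫ = ⟪w i, w j⟫) : ⟪v j, v i⟫ = ⟪w j, w i⟫ := by
    rwa [real_inner_comm, real_inner_comm (w i)]
  ext i j
  simp only [gram_apply]
  fin_cases i <;> fin_cases j <;> first | exact hdiag _ | assumption | exact hsymm ‹_›

theorem two_mul_prod_inner_eq_of_finrank_le_two [FiniteDimensional ℝ E]
    (hE : Module.finrank ℝ E ≤ 2) {f : Fin 3 → E} (hf : ∀ i, ‖f i‖ = 1) :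
    2 * ∏ k, ⟪f (k + 1), f (k + 2)⟫ = ∑ k, ⟪f (k + 1), f (k + 2)⟫ ^ 2 - 1 := by
  have hdet := det_gram_eq_zero_of_finrank_lt (𝕜 := ℝ) f (by simp; omega)
  rw [det_fin_three] at hdet
  simp only [gram_apply, real_inner_self_eq_norm_sq, hf] at hdet
  simp only [Fin.prod_univ_three, Fin.sum_univ_three, zero_add, Fin.reduceAdd]
  rw [real_inner_comm (f 0) (f 1), real_inner_comm (f 1) (f 2),
    real_inner_comm (f 2) (f 0)] at hdet
  linear_combination hdet

/-- Each pair of indices of a triple is labelled by the index it omits (addition in `Fin 3` wraps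
around), so that permuting the triple permutes these values. -/
def oppositeAbsInner (f : Fin 3 → E) (k : Fin 3) : ℝ := |⟪f (k + 1), f (k + 2)⟫|

theorem oppositeAbsInner_comp_perm (f : Fin 3 → E) (σ : Equiv.Perm (Fin 3)) :
    oppositeAbsInner (f ∘ σ) = oppositeAbsInner f ∘ σ := by
  funext k
  rcases Fin.perm_three_apply_add σ k with ⟨h1, h2⟩ | ⟨h1, h2⟩
  · simp [oppositeAbsInner, h1, h2]
  · simp [oppositeAbsInner, h1, h2, real_inner_comm]

theorem oppositeAbsInner_smul_map {F : Type*} [NormedAddCommGroup F] [InnerProductSpace ℝ F]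
    (f : Fin 3 → E) (U : E →ₗᵢ[ℝ] F) {ε : Fin 3 → ℝ} (hε : ∀ i, |ε i| = 1) :
    oppositeAbsInner (fun i => ε i • U (f i)) = oppositeAbsInner f := by
  funext k
  simp [oppositeAbsInner, real_inner_smul_left, real_inner_smul_right, abs_mul, hε]

theorem map_univ_oppositeAbsInner (f : Fin 3 → E) :
    Finset.univ.val.map (oppositeAbsInner f) = {|⟪f 0, f 1⟫|, |⟪f 0, f 2⟫|, |⟪f 1, f 2⟫|} := by
  rw [Fin.univ_val_map, ← Multiset.coe_reverse]
  simp [List.ofFn_succ, oppositeAbsInner, real_inner_comm (f 0) (f 2)]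
  rfl

end Triple

theorem FrameEquiv.of_comp_perm {k : ℕ} {f g : Fin k → EuclideanSpace ℝ (Fin 2)}
    {σ : Equiv.Perm (Fin k)} (h : FrameEquiv (f ∘ σ) g) : FrameEquiv f g := by
  obtain ⟨U, τ, ε, hε, hg⟩ := h
  exact ⟨U, τ.trans σ, ε, hε, hg⟩

theorem FrameEquiv.exists_perm_oppositeAbsInner_eq {f g : Fin 3 → EuclideanSpace ℝ (Fin 2)}
    (h : FrameEquiv f g) :
    ∃ σ : Equiv.Perm (Fin 3), oppositeAbsInner g = oppositeAbsInner f ∘ σ := by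
  obtain ⟨U, σ, ε, hε, hg⟩ := h
  refine ⟨σ, ?_⟩
  rw [funext hg, ← oppositeAbsInner_comp_perm]
  exact oppositeAbsInner_smul_map (f ∘ σ) U.toLinearIsometry fun i => by
    rcases hε i with h | h <;> simp [h]

theorem frameEquiv_of_oppositeAbsInner_eq {f g : Fin 3 → EuclideanSpace ℝ (Fin 2)}
    (hf : ∀ i, ‖f i‖ = 1) (hg : ∀ i, ‖g i‖ = 1) (h : oppositeAbsInner f = oppositeAbsInner g) :
    FrameEquiv f g := by
  have hprod : ∏ k, ⟪f (k + 1), f (k + 2)⟫ = ∏ k, ⟪g (k + 1), g (k + 2)⟫ := by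
    have hsq (k : Fin 3) : ⟪f (k + 1), f (k + 2)⟫ ^ 2 = ⟪g (k + 1), g (k + 2)⟫ ^ 2 :=
      (sq_eq_sq_iff_abs_eq_abs _ _).mpr (congrFun h k)
    have hE : Module.finrank ℝ (EuclideanSpace ℝ (Fin 2)) ≤ 2 := by simp
    have hf2 := two_mul_prod_inner_eq_of_finrank_le_two hE hf
    have hg2 := two_mul_prod_inner_eq_of_finrank_le_two hE hg
    simp only [hsq] at hf2
    linarith
  obtain ⟨ε, hε, hεg⟩ := exists_signs_of_abs_eq_of_prod_eq (congrFun h) hprod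
  have hgram : Matrix.gram ℝ (fun i => ε i • f i) = Matrix.gram ℝ g := by
    refine Matrix.gram_eq_of_inner_eq_fin_three (fun i => ?_) (fun k => ?_)
    · rcases hε i with h | h <;> simp [h, hf, hg]
    · simp only [real_inner_smul_left, real_inner_smul_right, hεg k]
      ring
  obtain ⟨U, hU⟩ := Matrix.exists_linearIsometryEquiv_apply_eq_of_gram_eq hgram
  exact ⟨U, 1, ε, hε, fun i => by rw [← hU i, map_smul]; rfl⟩

theorem frameEquiv_iff_absGram_eq_general (f g : Fin 3 → EuclideanSpace ℝ (Fin 2))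
    (hf1 : ∀ i, ‖f i‖ = 1) (hg1 : ∀ i, ‖g i‖ = 1) :
    FrameEquiv f g ↔
      ({|⟪f 0, f 1⟫|, |⟪f 0, f 2⟫|, |⟪f 1, f 2⟫|} : Multiset ℝ) =
        ({|⟪g 0, g 1⟫|, |⟪g 0, g 2⟫|, |⟪g 1, g 2⟫|} : Multiset ℝ) := by
  rw [← map_univ_oppositeAbsInner, ← map_univ_oppositeAbsInner]
  constructor
  · intro h
    obtain ⟨σ, hσ⟩ := h.exists_perm_oppositeAbsInner_eq
    rw [hσ, ← Multiset.map_map, Multiset.map_univ_val_equiv]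
  · intro h
    obtain ⟨σ, hσ⟩ := Fintype.exists_perm_comp_eq_of_map_univ_eq h
    rw [← oppositeAbsInner_comp_perm] at hσ
    exact (frameEquiv_of_oppositeAbsInner_eq (fun i => hf1 (σ i)) hg1 hσ).of_comp_perm

/-- Two unit-norm frames of `ℝ²` with three vectors each are equivalent if and
only if their multisets of absolute pairwise inner products agree. -/
theorem frameEquiv_iff_absGram_eq (f g : Fin 3 → EuclideanSpace ℝ (Fin 2))
    (hf1 : ∀ i, ‖f i‖ = 1) (hg1 : ∀ i, ‖g i‖ = 1)
    (hfspan : Submodule.span ℝ (Set.range f) = ⊤)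
    (hgspan : Submodule.span ℝ (Set.range g) = ⊤) :
    FrameEquiv f g ↔
      ({|⟪f 0, f 1⟫|, |⟪f 0, f 2⟫|, |⟪f 1, f 2⟫|} : Multiset ℝ) =
        ({|⟪g 0, g 1⟫|, |⟪g 0, g 2⟫|, |⟪g 1, g 2⟫|} : Multiset ℝ) :=
  frameEquiv_iff_absGram_eq_general f g hf1 hg1
end

section
/- Let k ≥ 2 and let g : ℤ → ℝ² be the 2k-periodic sequence with g_n = f_n for 1 ≤ n ≤ k and g_n = −f_{n−k} for k+1 ≤ n ≤ 2k, where f₁,…,f_k are unit vectors in ℝ² ordered counterclockwise with all consecutive angles positive and total angle < π. Then for each i, the set {g_i, g_{i+1}, …, g_{i+k−1}} is a frame equivalent to {f₁,…,f_k}, and its cross angle equals π minus the angle between g_{i+k−1} and g_{i+k}. -/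
open Real

/-!
Writing `g n = vec2 (θ n)`, the relation `θ (n + k) = θ n + π` makes `g` antiperiodic with
antiperiod `k`, so `g (i + j) = ± g ((i + j) mod k)`. Hence the window starting at `i` is the
initial window, permuted by the rotation `j ↦ i + j` of `ℤ/k` and with some signs flipped.
The cross-angle identity is the same relation at `n = i`.
-/

open Real Function

lemma vec2_antiperiodic : Antiperiodic vec2 π := fun t => by
  ext j
  fin_cases j <;> simp [vec2, cos_add_pi, sin_add_pi]

section
open scoped Fin.IntCast

lemma Fin.val_intCast_add {k : ℕ} [NeZero k] (i : ℤ) (j : Fin k) :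
    (((i + j : Fin k) : ℕ) : ℤ) = (i + j) % k := by
  have hk : (0 : ℤ) < k := by exact_mod_cast Nat.pos_of_neZero k
  rw [Fin.val_add, Fin.val_intCast, Int.natCast_emod, Nat.cast_add,
    Int.toNat_of_nonneg (Int.emod_nonneg i hk.ne'), Int.emod_add_emod]

lemma frameEquiv_window_of_antiperiodic {k : ℕ} [NeZero k] {g : ℤ → EuclideanSpace ℝ (Fin 2)}
    (hg : Antiperiodic g k) (i : ℤ) :
    FrameEquiv (fun j : Fin k => g j) (fun j : Fin k => g (i + j)) := by
  refine ⟨LinearIsometryEquiv.refl ℝ _, Equiv.addLeft (i : Fin k),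
    fun j => (((i + j) / k).negOnePow : ℤ), fun j => ?_, fun j => ?_⟩
  · rcases Int.units_eq_one_or ((i + j) / k).negOnePow with h | h <;> simp [h]
  · calc g (i + j) = g ((i + j) % k + ((i + j) / k) • (k : ℤ)) := by
          rw [smul_eq_mul, mul_comm, Int.emod_add_mul_ediv]
      _ = (((i + j) / k).negOnePow : ℤ) • g ((i + j) % k) := hg.add_zsmul_eq _
      _ = _ := by rw [Int.cast_smul_eq_zsmul]; simp [Fin.val_intCast_add]

end

theorem window_frameEquiv_and_crossAngle_general (k : ℕ) (hk : 2 ≤ k) (θ : ℤ → ℝ)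
    (hper : ∀ n : ℤ, θ (n + k) = θ n + π) (i : ℤ) :
    FrameEquiv (fun j : Fin k => vec2 (θ j)) (fun j : Fin k => vec2 (θ (i + j))) ∧
      θ (i + k - 1) - θ i = π - (θ (i + k) - θ (i + k - 1)) := by
  have : NeZero k := ⟨by omega⟩
  have hg : Antiperiodic (vec2 ∘ θ) k := fun n => by
    simp only [comp_apply, hper, vec2_antiperiodic _]
  exact ⟨frameEquiv_window_of_antiperiodic hg i, by linarith [hper i]⟩

/-- Let `f₁, …, f_k` be unit vectors in `ℝ²`, counterclockwise with positive
consecutive angles and total angle `< π`, encoded by angles `θ : ℤ → ℝ` with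
`θ(n+1) > θ(n)` and `θ(n+k) = θ(n) + π` (so that `g_n = vec2 (θ n)` is the
`2k`-periodic sequence `g_n = f_n`, `g_{n+k} = −f_n`). Then for each `i` the
window `{g_i, …, g_{i+k−1}}` is a frame equivalent to `{f₁, …, f_k}`, and its
cross angle `θ(i+k−1) − θ(i)` equals `π` minus the angle between `g_{i+k−1}`
and `g_{i+k}`. -/
theorem window_frameEquiv_and_crossAngle (k : ℕ) (hk : 2 ≤ k) (θ : ℤ → ℝ)
    (hmono : ∀ n : ℤ, θ n < θ (n + 1))
    (hper : ∀ n : ℤ, θ (n + k) = θ n + π) (i : ℤ) :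
    FrameEquiv (fun j : Fin k => vec2 (θ j)) (fun j : Fin k => vec2 (θ (i + j))) ∧
      θ (i + k - 1) - θ i = π - (θ (i + k) - θ (i + k - 1)) :=
  window_frameEquiv_and_crossAngle_general k hk θ hper i
end
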